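/- arXiv:1702.05548 — 7 statements merged into one kernel-verified Lean document; each statement's English description precedes it below -/
import Mathlib

section
/- Let H be a real inner product space, α > 0, and let K, K' ⊆ H be nonempty closed convex sets. Let D ≥ 0, B ≥ 0 be such that K has diameter at most D and both K and K' are contained in the closed ball of radius B centered at 0. Let F : H → ℝ be differentiable, let v ∈ H, let ŷ ∈ H, and let z ∈ K, z' ∈ K'. Suppose x⁺ is the projection of ŷ − α • ∇F(ŷ) onto K (i.e., x⁺ ∈ K and ⟨(ŷ − α • ∇F(ŷ)) − x⁺, u − x⁺⟩ ≤ 0 for all u ∈ K), and y⁺ is the projection of x⁺ onto K' (i.e., y⁺ ∈ K' and ⟨x⁺ − y⁺, u − y⁺⟩ ≤ 0 for all u ∈ K'). Then ‖y⁺ − z'‖² ≤ ‖ŷ − z − α • ∇F(ŷ)‖² + 2(D + B)·‖z − z'‖. -/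
open RealInnerProductSpace

lemma proj_quasi {H : Type*} [NormedAddCommGroup H] [InnerProductSpace ℝ H]
    (v p w : H) (h : ⟪v - p, w - p⟫ ≤ 0) : ‖p - w‖ ≤ ‖v - w‖ := by
  have key : ‖v - w‖ ^ 2 = ‖v - p‖ ^ 2 + 2 * ⟪v - p, p - w⟫ + ‖p - w‖ ^ 2 := by
    have : v - w = (v - p) + (p - w) := by abel
    rw [this, norm_add_sq_real]
  have h2 : 0 ≤ ⟪v - p, p - w⟫ := by
    have : ⟪v - p, p - w⟫ = -⟪v - p, w - p⟫ := by
      rw [← inner_neg_right]; congr 1; abel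
    rw [this]; linarith
  have hsq : ‖p - w‖ ^ 2 ≤ ‖v - w‖ ^ 2 := by nlinarith [sq_nonneg ‖v - p‖]
  nlinarith [norm_nonneg (v - w), norm_nonneg (p - w)]

/-- Inequality (9) in the proof of Theorem 1 (key projection step of OGC):
the squared distance of the next implemented setpoint to the next comparator is
bounded by the squared distance of the perturbed gradient step to the current
comparator plus a drift term `2(D+B)‖z − z'‖`. -/
theorem ogc_projection_step
    {H : Type*} [NormedAddCommGroup H] [InnerProductSpace ℝ H]
    (α D B : ℝ) (hα : 0 < α) (hD : 0 ≤ D) (hB : 0 ≤ B)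
    (K K' : Set H)
    (hKne : K.Nonempty) (hKcl : IsClosed K) (hKcv : Convex ℝ K)
    (hK'ne : K'.Nonempty) (hK'cl : IsClosed K') (hK'cv : Convex ℝ K')
    (hKdiam : ∀ p ∈ K, ∀ q ∈ K, ‖p - q‖ ≤ D)
    (hKball : ∀ p ∈ K, ‖p‖ ≤ B) (hK'ball : ∀ p ∈ K', ‖p‖ ≤ B)
    (F : H → ℝ) (F' : H → H) (hF : ∀ p, HasFDerivAt F (innerSL ℝ (F' p)) p)
    (v : H) (yhat : H) (z z' : H) (hz : z ∈ K) (hz' : z' ∈ K')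
    (xp yp : H)
    (hxpK : xp ∈ K)
    (hxp : ∀ u ∈ K, ⟪(yhat - α • F' yhat) - xp, u - xp⟫ ≤ 0)
    (hypK' : yp ∈ K')
    (hyp : ∀ u ∈ K', ⟪xp - yp, u - yp⟫ ≤ 0) :
    ‖yp - z'‖ ^ 2 ≤ ‖yhat - z - α • F' yhat‖ ^ 2 + 2 * (D + B) * ‖z - z'‖ := by
  have h1 : ‖yp - z'‖ ≤ ‖xp - z'‖ := proj_quasi xp yp z' (hyp z' hz')
  have h2 : ‖xp - z‖ ≤ ‖(yhat - α • F' yhat) - z‖ :=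
    proj_quasi (yhat - α • F' yhat) xp z (hxp z hz)
  have hrw : (yhat - α • F' yhat) - z = yhat - z - α • F' yhat := by abel
  rw [hrw] at h2
  -- expand ‖xp - z'‖² = ‖xp - z‖² + 2⟪xp - z, z - z'⟫ + ‖z - z'‖²
  have hexp : ‖xp - z'‖ ^ 2 = ‖xp - z‖ ^ 2 + 2 * ⟪xp - z, z - z'⟫ + ‖z - z'‖ ^ 2 := by
    have : xp - z' = (xp - z) + (z - z') := by abel
    rw [this, norm_add_sq_real]
  have hcross : ⟪xp - z, z - z'⟫ ≤ D * ‖z - z'‖ := by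
    calc ⟪xp - z, z - z'⟫ ≤ ‖xp - z‖ * ‖z - z'‖ := real_inner_le_norm _ _
      _ ≤ D * ‖z - z'‖ := by
        apply mul_le_mul_of_nonneg_right (hKdiam xp hxpK z hz) (norm_nonneg _)
  have hzz : ‖z - z'‖ ^ 2 ≤ 2 * B * ‖z - z'‖ := by
    have : ‖z - z'‖ ≤ ‖z‖ + ‖z'‖ := norm_sub_le _ _
    nlinarith [norm_nonneg (z - z'), hKball z hz, hK'ball z' hz']
  have hsq1 : ‖yp - z'‖ ^ 2 ≤ ‖xp - z'‖ ^ 2 :=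
    pow_le_pow_left₀ (norm_nonneg _) h1 2
  have hsq2 : ‖xp - z‖ ^ 2 ≤ ‖yhat - z - α • F' yhat‖ ^ 2 :=
    pow_le_pow_left₀ (norm_nonneg _) h2 2
  nlinarith
end

section
/- Let H be a real inner product space, α > 0, ε ≥ 0, λ ≥ 0, G ≥ 0, D ≥ 0. Let F : H → ℝ be convex and differentiable with ‖∇F(x)‖ ≤ G for all x ∈ H and ‖∇F(x) − ∇F(x')‖ ≤ λ‖x − x'‖ for all x, x' ∈ H. Let y, z ∈ H with ‖y − z‖ ≤ D, and let ŷ ∈ H with ‖ŷ − y‖ ≤ ε. Then ‖ŷ − z − α • ∇F(ŷ)‖² ≤ ‖y − z‖² − 2α·(F(y) − F(z)) + α²G² + (2(D + αG) + (1 + αλ)ε)·(1 + αλ)·ε. -/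
open RealInnerProductSpace

lemma grad_ineq_aux
    {H : Type*} [NormedAddCommGroup H] [InnerProductSpace ℝ H]
    (F : H → ℝ) (F' : H → H)
    (hconv : ConvexOn ℝ Set.univ F)
    (hgrad : ∀ p, HasFDerivAt F (innerSL ℝ (F' p)) p)
    (y z : H) : ⟪F' y, z - y⟫ ≤ F z - F y := by
  set L : ℝ →ᵃ[ℝ] H := AffineMap.lineMap y z with hL
  have hg : ConvexOn ℝ (L ⁻¹' Set.univ) (F ∘ L) := hconv.comp_affineMap L
  have hL0 : L 0 = y := AffineMap.lineMap_apply_zero y z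
  have hL1 : L 1 = z := AffineMap.lineMap_apply_one y z
  have hd : HasDerivAt (F ∘ L) (⟪F' y, z - y⟫) 0 := by
    have hline : HasDerivAt (fun t : ℝ => L t) (z - y) 0 := by
      have : (fun t : ℝ => L t) = fun t : ℝ => t • (z - y) + y := by
        funext t
        simp [hL, AffineMap.lineMap_apply_module]
        module
      rw [this]
      simpa using (hasDerivAt_id (0:ℝ)).smul_const (z - y) |>.add_const y
    have hgy : HasFDerivAt F (innerSL ℝ (F' y)) (L 0) := hL0 ▸ hgrad y
    simpa using hgy.comp_hasDerivAt (0:ℝ) hline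
  have := hg.le_slope_of_hasDerivAt (x := (0:ℝ)) (y := (1:ℝ))
    (by simp) (by simp) one_pos hd
  simpa [slope, hL0, hL1] using this

/-- Inequality (12) in the proof of Theorem 1: the perturbed gradient-descent step
estimate, controlling the effect of an `ε`-accurate measurement `yhat` of the
implemented setpoint `y` on one step of the Online Gradient Control algorithm. -/
theorem ogc_perturbed_gradient_step
    {H : Type*} [NormedAddCommGroup H] [InnerProductSpace ℝ H]
    (α ε lam G D : ℝ) (hα : 0 < α) (hε : 0 ≤ ε) (hlam : 0 ≤ lam)
    (hG : 0 ≤ G) (hD : 0 ≤ D)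
    (F : H → ℝ) (F' : H → H)
    (hconv : ConvexOn ℝ Set.univ F)
    (hgrad : ∀ p, HasFDerivAt F (innerSL ℝ (F' p)) p)
    (hGbound : ∀ p, ‖F' p‖ ≤ G)
    (hLip : ∀ p q, ‖F' p - F' q‖ ≤ lam * ‖p - q‖)
    (y z yhat : H) (hyz : ‖y - z‖ ≤ D) (hmeas : ‖yhat - y‖ ≤ ε) :
    ‖yhat - z - α • F' yhat‖ ^ 2
      ≤ ‖y - z‖ ^ 2 - 2 * α * (F y - F z) + α ^ 2 * G ^ 2
        + (2 * (D + α * G) + (1 + α * lam) * ε) * ((1 + α * lam) * ε) := by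
  have key : F y - F z ≤ ⟪F' y, y - z⟫ := by
    have h1 := grad_ineq_aux F F' hconv hgrad y z
    have h2 : ⟪F' y, y - z⟫ = -⟪F' y, z - y⟫ := by
      rw [← inner_neg_right]; congr 1; abel
    linarith [h2.ge, h2.le]
  set v := y - z - α • F' y with hv
  set w := (yhat - y) - α • (F' yhat - F' y) with hw
  have hsplit : yhat - z - α • F' yhat = v + w := by
    rw [hv, hw]; module
  have hFy := hGbound y
  have hFynn : (0:ℝ) ≤ ‖F' y‖ := norm_nonneg _
  have hnv : ‖v‖ ≤ D + α * G := by
    calc ‖v‖ ≤ ‖y - z‖ + ‖α • F' y‖ := norm_sub_le _ _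
      _ ≤ D + α * G := by
          rw [norm_smul, Real.norm_eq_abs, abs_of_pos hα]
          have : α * ‖F' y‖ ≤ α * G := by nlinarith
          linarith
  have hnw : ‖w‖ ≤ (1 + α * lam) * ε := by
    have h3 : ‖F' yhat - F' y‖ ≤ lam * ‖yhat - y‖ := hLip yhat y
    calc ‖w‖ ≤ ‖yhat - y‖ + ‖α • (F' yhat - F' y)‖ := norm_sub_le _ _
      _ ≤ (1 + α * lam) * ε := by
          rw [norm_smul, Real.norm_eq_abs, abs_of_pos hα]
          nlinarith [mul_le_mul_of_nonneg_left h3 hα.le,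
            mul_le_mul_of_nonneg_left hmeas (mul_nonneg hα.le hlam)]
  have hvsq : ‖v‖ ^ 2 = ‖y - z‖ ^ 2 - 2 * α * ⟪F' y, y - z⟫ + α ^ 2 * ‖F' y‖ ^ 2 := by
    rw [hv, @norm_sub_sq_real, real_inner_smul_right, norm_smul, Real.norm_eq_abs,
      abs_of_pos hα, real_inner_comm]
    ring
  have hexp : ‖yhat - z - α • F' yhat‖ ^ 2 = ‖v‖ ^ 2 + 2 * ⟪v, w⟫ + ‖w‖ ^ 2 := by
    rw [hsplit, @norm_add_sq_real]
  have hinner : ⟪v, w⟫ ≤ ‖v‖ * ‖w‖ := real_inner_le_norm v w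
  have hnvnn : (0:ℝ) ≤ ‖v‖ := norm_nonneg _
  have hnwnn : (0:ℝ) ≤ ‖w‖ := norm_nonneg _
  rw [hexp, hvsq]
  have e1 : ‖w‖ ^ 2 ≤ ((1 + α * lam) * ε) ^ 2 := pow_le_pow_left₀ hnwnn hnw 2
  have e2 : α ^ 2 * ‖F' y‖ ^ 2 ≤ α ^ 2 * G ^ 2 :=
    mul_le_mul_of_nonneg_left (pow_le_pow_left₀ hFynn hFy 2) (sq_nonneg α)
  have e3 : α * (F y - F z) ≤ α * ⟪F' y, y - z⟫ := mul_le_mul_of_nonneg_left key hα.le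
  have e4 : ‖v‖ * ‖w‖ ≤ (D + α * G) * ((1 + α * lam) * ε) :=
    mul_le_mul hnv hnw hnwnn (by positivity)
  nlinarith [e1, e2, e3, e4, hinner]
end

section
/- Under the OGC setting: for every n ≥ 1 and every admissible sequence z (i.e., z k ∈ U k for all k), ‖y (n+1) − z (n+1)‖² ≤ ‖y n − z n‖² − 2α·(F n (y n) − F n (z n)) + G²α² + (2(D + αG) + (1 + αλ)ε)·(1 + αλ)·ε + 2(D + B)·‖z n − z (n+1)‖. -/
open RealInnerProductSpace

/-- Projection inequality: if `p` satisfies the variational inequality for `v` at `u`,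
then `p` is closer to `u` than `v` is. -/
lemma proj_dist_sq_le {H : Type*} [NormedAddCommGroup H] [InnerProductSpace ℝ H]
    (p v u : H) (h : ⟪v - p, u - p⟫ ≤ 0) : ‖p - u‖ ^ 2 ≤ ‖v - u‖ ^ 2 := by
  have hdec : v - u = (v - p) + (p - u) := by abel
  have hexp : ‖v - u‖ ^ 2 = ‖v - p‖ ^ 2 + 2 * ⟪v - p, p - u⟫ + ‖p - u‖ ^ 2 := by
    rw [hdec, @norm_add_sq_real]
  have hswap : ⟪v - p, p - u⟫ = -⟪v - p, u - p⟫ := by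
    rw [← inner_neg_right]; congr 1; abel
  nlinarith [sq_nonneg ‖v - p‖]

/-- Subgradient inequality for a convex differentiable function. -/
lemma subgrad_ineq {H : Type*} [NormedAddCommGroup H] [InnerProductSpace ℝ H]
    (F : H → ℝ) (g a b : H) (hconv : ConvexOn ℝ Set.univ F)
    (hd : HasFDerivAt F (innerSL ℝ g) a) : ⟪g, b - a⟫ ≤ F b - F a := by
  set φ : ℝ → ℝ := fun t => F (a + t • (b - a)) with hφdef
  have hφconv : ConvexOn ℝ Set.univ φ := by
    have h1 := hconv.comp_affineMap (AffineMap.lineMap a b : ℝ →ᵃ[ℝ] H)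
    have h2 : (F ∘ (AffineMap.lineMap a b : ℝ →ᵃ[ℝ] H)) = φ := by
      funext t
      simp only [φ, AffineMap.lineMap_apply, Function.comp, vsub_eq_sub, vadd_eq_add]
      rw [add_comm]
    rw [h2] at h1
    simpa using h1
  have hc : HasDerivAt (fun t : ℝ => a + t • (b - a)) (b - a) 0 := by
    have h1 : HasDerivAt (fun t : ℝ => t • (b - a)) ((1 : ℝ) • (b - a)) 0 :=
      (hasDerivAt_id (0 : ℝ)).smul_const (b - a)
    simpa using h1.const_add a
  have hd' : HasFDerivAt F (innerSL ℝ g) (a + (0 : ℝ) • (b - a)) := by simpa using hd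
  have hD : HasDerivAt φ (⟪g, b - a⟫) 0 := by
    have := hd'.comp_hasDerivAt 0 hc
    exact this
  have hslope := hφconv.le_slope_of_hasDerivAt (Set.mem_univ (0 : ℝ))
    (Set.mem_univ (1 : ℝ)) one_pos hD
  have : ⟪g, b - a⟫ ≤ φ 1 - φ 0 := by
    simpa [slope_def_field] using hslope
  simpa [φ] using this

set_option maxHeartbeats 1000000 in
/-- The combined one-step recursion (inequality (13)) in the proof of Theorem 1,
for the Online Gradient Control (OGC) algorithm. -/
theorem ogc_one_step_recursion
    {H : Type*} [NormedAddCommGroup H] [InnerProductSpace ℝ H]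
    (α ε lam G D B : ℝ) (hα : 0 < α) (hε : 0 ≤ ε) (hlam : 0 ≤ lam)
    (hG : 0 ≤ G) (hD : 0 ≤ D) (hB : 0 ≤ B)
    (S U : ℕ → Set H) (F : ℕ → H → ℝ) (F' : ℕ → H → H)
    (y x yhat : ℕ → H)
    -- the sets S n : nonempty, closed, convex, in the ball of radius B, diameter ≤ D
    (hSne : ∀ n, 1 ≤ n → (S n).Nonempty)
    (hScl : ∀ n, 1 ≤ n → IsClosed (S n))
    (hScv : ∀ n, 1 ≤ n → Convex ℝ (S n))
    (hSball : ∀ n, 1 ≤ n → ∀ p ∈ S n, ‖p‖ ≤ B)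
    (hSdiam : ∀ n, 1 ≤ n → ∀ p ∈ S n, ∀ q ∈ S n, ‖p - q‖ ≤ D)
    -- the sets U n ⊆ S n : nonempty, closed, convex
    (hUS : ∀ n, 1 ≤ n → U n ⊆ S n)
    (hUne : ∀ n, 1 ≤ n → (U n).Nonempty)
    (hUcl : ∀ n, 1 ≤ n → IsClosed (U n))
    (hUcv : ∀ n, 1 ≤ n → Convex ℝ (U n))
    -- the objectives F n : convex, differentiable with gradient F' n bounded by G
    -- and lam-Lipschitz
    (hFconv : ∀ n, 1 ≤ n → ConvexOn ℝ Set.univ (F n))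
    (hgrad : ∀ n, 1 ≤ n → ∀ p, HasFDerivAt (F n) (innerSL ℝ (F' n p)) p)
    (hGbound : ∀ n, 1 ≤ n → ∀ p, ‖F' n p‖ ≤ G)
    (hLip : ∀ n, 1 ≤ n → ∀ p q, ‖F' n p - F' n q‖ ≤ lam * ‖p - q‖)
    -- OGC iterates
    (hyS : ∀ n, 1 ≤ n → y n ∈ S n)
    (hmeas : ∀ n, 1 ≤ n → ‖y n - yhat n‖ ≤ ε)
    (hxU : ∀ n, 1 ≤ n → x (n + 1) ∈ U n)
    (hxproj : ∀ n, 1 ≤ n → ∀ u ∈ U n,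
      ⟪(yhat n - α • F' n (yhat n)) - x (n + 1), u - x (n + 1)⟫ ≤ 0)
    (hyS' : ∀ n, 1 ≤ n → y (n + 1) ∈ S (n + 1))
    (hyproj : ∀ n, 1 ≤ n → ∀ u ∈ S (n + 1),
      ⟪x (n + 1) - y (n + 1), u - y (n + 1)⟫ ≤ 0)
    -- the claim
    (n : ℕ) (hn : 1 ≤ n) (z : ℕ → H) (hz : ∀ k, 1 ≤ k → z k ∈ U k) :
    ‖y (n + 1) - z (n + 1)‖ ^ 2
      ≤ ‖y n - z n‖ ^ 2 - 2 * α * (F n (y n) - F n (z n)) + G ^ 2 * α ^ 2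
        + (2 * (D + α * G) + (1 + α * lam) * ε) * ((1 + α * lam) * ε)
        + 2 * (D + B) * ‖z n - z (n + 1)‖ := by
  have hn1 : 1 ≤ n + 1 := Nat.le_add_left 1 n
  set g : H := F' n (yhat n) with hgdef
  set g' : H := F' n (y n) with hg'def
  set c : ℝ := (1 + α * lam) * ε with hcdef
  have hc0 : 0 ≤ c := by positivity
  have hznU : z n ∈ U n := hz n hn
  have hznS : z n ∈ S n := hUS n hn hznU
  have hzn1S : z (n + 1) ∈ S (n + 1) := hUS (n + 1) hn1 (hz (n + 1) hn1)
  -- Step A : projection onto U n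
  have hA : ‖x (n + 1) - z n‖ ^ 2 ≤ ‖(yhat n - α • g) - z n‖ ^ 2 :=
    proj_dist_sq_le _ _ _ (hxproj n hn (z n) hznU)
  -- error estimate
  have hmeas' : ‖yhat n - y n‖ ≤ ε := by rw [norm_sub_rev]; exact hmeas n hn
  have hgg' : ‖g - g'‖ ≤ lam * ε := by
    calc ‖g - g'‖ ≤ lam * ‖yhat n - y n‖ := hLip n hn (yhat n) (y n)
      _ ≤ lam * ε := by nlinarith
  have herr : ‖(yhat n - y n) - α • (g - g')‖ ≤ c := by
    calc ‖(yhat n - y n) - α • (g - g')‖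
        ≤ ‖yhat n - y n‖ + ‖α • (g - g')‖ := norm_sub_le _ _
      _ = ‖yhat n - y n‖ + α * ‖g - g'‖ := by
          rw [norm_smul, Real.norm_eq_abs, abs_of_pos hα]
      _ ≤ ε + α * (lam * ε) := by nlinarith
      _ = c := by rw [hcdef]; ring
  have hdecomp : (yhat n - α • g) - z n
      = ((y n - α • g') - z n) + ((yhat n - y n) - α • (g - g')) := by
    rw [smul_sub]; abel
  have hg'G : ‖g'‖ ≤ G := hGbound n hn (y n)
  have hwle : ‖(y n - α • g') - z n‖ ≤ D + α * G := by
    have h1 : (y n - α • g') - z n = (y n - z n) - α • g' := by abel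
    rw [h1]
    calc ‖(y n - z n) - α • g'‖ ≤ ‖y n - z n‖ + ‖α • g'‖ := norm_sub_le _ _
      _ = ‖y n - z n‖ + α * ‖g'‖ := by
          rw [norm_smul, Real.norm_eq_abs, abs_of_pos hα]
      _ ≤ D + α * G := by
          have := hSdiam n hn (y n) (hyS n hn) (z n) hznS
          nlinarith
  have hvsq : ‖(yhat n - α • g) - z n‖ ^ 2
      ≤ ‖(y n - α • g') - z n‖ ^ 2 + (2 * (D + α * G) + c) * c := by
    rw [hdecomp]
    have htri := norm_add_le ((y n - α • g') - z n) ((yhat n - y n) - α • (g - g'))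
    have h0 := norm_nonneg ((y n - α • g') - z n)
    have h1 := norm_nonneg ((yhat n - y n) - α • (g - g'))
    have hsq := mul_self_le_mul_self (norm_nonneg _) htri
    have hprod : ‖(y n - α • g') - z n‖ * ‖(yhat n - y n) - α • (g - g')‖
        ≤ (D + α * G) * c := mul_le_mul hwle herr h1 (by positivity)
    nlinarith [sq_nonneg (‖(yhat n - y n) - α • (g - g')‖ - c)]
  -- expansion of the gradient step
  have hwexp : ‖(y n - α • g') - z n‖ ^ 2
      = ‖y n - z n‖ ^ 2 - 2 * α * ⟪g', y n - z n⟫ + α ^ 2 * ‖g'‖ ^ 2 := by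
    have h1 : (y n - α • g') - z n = (y n - z n) - α • g' := by abel
    rw [h1, @norm_sub_sq_real, real_inner_smul_right, real_inner_comm, norm_smul,
      Real.norm_eq_abs, abs_of_pos hα, mul_pow]
    ring
  have hsubgrad : F n (y n) - F n (z n) ≤ ⟪g', y n - z n⟫ := by
    have h1 := subgrad_ineq (F n) g' (y n) (z n) (hFconv n hn) (hgrad n hn (y n))
    have h2 : ⟪g', y n - z n⟫ = -⟪g', z n - y n⟫ := by
      rw [← inner_neg_right]; congr 1; abel
    linarith
  -- Step C : projection onto S (n+1)
  have hC : ‖y (n + 1) - z (n + 1)‖ ^ 2 ≤ ‖x (n + 1) - z (n + 1)‖ ^ 2 :=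
    proj_dist_sq_le _ _ _ (hyproj n hn (z (n + 1)) hzn1S)
  -- Step D : comparator movement
  have hxS : x (n + 1) ∈ S n := hUS n hn (hxU n hn)
  have haD : ‖x (n + 1) - z n‖ ≤ D := hSdiam n hn _ hxS _ hznS
  have hbB : ‖z n - z (n + 1)‖ ≤ 2 * B := by
    calc ‖z n - z (n + 1)‖ ≤ ‖z n‖ + ‖z (n + 1)‖ := norm_sub_le _ _
      _ ≤ 2 * B := by
          have h1 := hSball n hn (z n) hznS
          have h2 := hSball (n + 1) hn1 (z (n + 1)) hzn1S
          linarith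
  have hDstep : ‖x (n + 1) - z (n + 1)‖ ^ 2
      ≤ ‖x (n + 1) - z n‖ ^ 2 + 2 * (D + B) * ‖z n - z (n + 1)‖ := by
    have htri : ‖x (n + 1) - z (n + 1)‖ ≤ ‖x (n + 1) - z n‖ + ‖z n - z (n + 1)‖ :=
      norm_sub_le_norm_sub_add_norm_sub _ _ _
    have h0 := norm_nonneg (x (n + 1) - z (n + 1))
    have h1 := norm_nonneg (x (n + 1) - z n)
    have h2 := norm_nonneg (z n - z (n + 1))
    nlinarith
  -- combine everything
  have hg'sq : α ^ 2 * ‖g'‖ ^ 2 ≤ G ^ 2 * α ^ 2 := by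
    have h1 : ‖g'‖ ^ 2 ≤ G ^ 2 := by nlinarith [norm_nonneg g']
    nlinarith [sq_nonneg α]
  have hsub2 : 2 * α * (F n (y n) - F n (z n)) ≤ 2 * α * ⟪g', y n - z n⟫ :=
    mul_le_mul_of_nonneg_left hsubgrad (by positivity)
  have key1 : ‖x (n + 1) - z n‖ ^ 2
      ≤ ‖y n - z n‖ ^ 2 - 2 * α * (F n (y n) - F n (z n)) + G ^ 2 * α ^ 2
        + (2 * (D + α * G) + c) * c := by linarith
  linarith
end

section
/- Under the OGC setting: for every n ≥ 1 and every admissible sequence z (i.e., z k ∈ U k for all k), F n (y n) − F n (z n) ≤ (‖y n − z n‖² − ‖y (n+1) − z (n+1)‖²)/(2α) + α G²/2 + (2(D + αG) + (1 + αλ)ε)·(1 + αλ)·ε/(2α) + (D + B)·‖z n − z (n+1)‖/α. -/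
open RealInnerProductSpace

lemma proj_sq_le {H : Type*} [NormedAddCommGroup H] [InnerProductSpace ℝ H]
    {v p u : H} (h : ⟪v - p, u - p⟫ ≤ 0) : ‖p - u‖ ^ 2 ≤ ‖v - u‖ ^ 2 := by
  have hexp : ‖v - u‖ ^ 2 = ‖v - p‖ ^ 2 + 2 * ⟪v - p, p - u⟫ + ‖p - u‖ ^ 2 := by
    rw [show v - u = (v - p) + (p - u) by abel, norm_add_sq_real]
  have h2 : ⟪v - p, p - u⟫ = -⟪v - p, u - p⟫ := by
    rw [show p - u = -(u - p) by abel, inner_neg_right]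
  nlinarith [sq_nonneg ‖v - p‖]

lemma convex_grad_le {H : Type*} [NormedAddCommGroup H] [InnerProductSpace ℝ H]
    {f : H → ℝ} {g : H → H} (hf : ConvexOn ℝ Set.univ f)
    (hg : ∀ p, HasFDerivAt f (innerSL ℝ (g p)) p) (a b : H) :
    f a + ⟪g a, b - a⟫ ≤ f b := by
  set φ : ℝ → ℝ := fun t => f (a + t • (b - a)) with hφ
  have hline : ∀ t : ℝ, HasDerivAt φ ⟪g (a + t • (b - a)), b - a⟫ t := by
    intro t
    have h1 : HasDerivAt (fun t : ℝ => a + t • (b - a)) (b - a) t := by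
      simpa using ((hasDerivAt_id t).smul_const (b - a)).const_add a
    have h2 := (hg (a + t • (b - a))).comp_hasDerivAt t h1
    simp at h2
    exact h2
  have hconv : ConvexOn ℝ Set.univ φ := by
    have := hf.comp_affineMap (AffineMap.lineMap a b : ℝ →ᵃ[ℝ] H)
    have heq : φ = f ∘ (AffineMap.lineMap a b : ℝ →ᵃ[ℝ] H) := by
      funext t
      simp [hφ, AffineMap.lineMap_apply, vsub_eq_sub, vadd_eq_add, add_comm]
    rw [heq]
    simpa using this
  have hslope := hconv.le_slope_of_hasDerivAt (Set.mem_univ (0:ℝ)) (Set.mem_univ (1:ℝ))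
    one_pos (by simpa using hline 0)
  have h0 : φ 0 = f a := by simp [hφ]
  have h1 : φ 1 = f b := by simp [hφ]
  rw [slope_def_field] at hslope
  simp [h0, h1] at hslope
  linarith


set_option maxHeartbeats 1000000 in
/-- The per-step (instantaneous) dynamic regret bound obtained by rearranging the
one-step recursion in the proof of Theorem 1 (OGC algorithm). -/
theorem ogc_per_step_regret
    {H : Type*} [NormedAddCommGroup H] [InnerProductSpace ℝ H]
    (α ε lam G D B : ℝ) (hα : 0 < α) (hε : 0 ≤ ε) (hlam : 0 ≤ lam)
    (hG : 0 ≤ G) (hD : 0 ≤ D) (hB : 0 ≤ B)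
    (S U : ℕ → Set H) (F : ℕ → H → ℝ) (F' : ℕ → H → H)
    (y x yhat : ℕ → H)
    -- the sets S n : nonempty, closed, convex, in the ball of radius B, diameter ≤ D
    (hSne : ∀ n, 1 ≤ n → (S n).Nonempty)
    (hScl : ∀ n, 1 ≤ n → IsClosed (S n))
    (hScv : ∀ n, 1 ≤ n → Convex ℝ (S n))
    (hSball : ∀ n, 1 ≤ n → ∀ p ∈ S n, ‖p‖ ≤ B)
    (hSdiam : ∀ n, 1 ≤ n → ∀ p ∈ S n, ∀ q ∈ S n, ‖p - q‖ ≤ D)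
    -- the sets U n ⊆ S n : nonempty, closed, convex
    (hUS : ∀ n, 1 ≤ n → U n ⊆ S n)
    (hUne : ∀ n, 1 ≤ n → (U n).Nonempty)
    (hUcl : ∀ n, 1 ≤ n → IsClosed (U n))
    (hUcv : ∀ n, 1 ≤ n → Convex ℝ (U n))
    -- the objectives F n : convex, differentiable with gradient F' n bounded by G
    -- and lam-Lipschitz
    (hFconv : ∀ n, 1 ≤ n → ConvexOn ℝ Set.univ (F n))
    (hgrad : ∀ n, 1 ≤ n → ∀ p, HasFDerivAt (F n) (innerSL ℝ (F' n p)) p)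
    (hGbound : ∀ n, 1 ≤ n → ∀ p, ‖F' n p‖ ≤ G)
    (hLip : ∀ n, 1 ≤ n → ∀ p q, ‖F' n p - F' n q‖ ≤ lam * ‖p - q‖)
    -- OGC iterates
    (hyS : ∀ n, 1 ≤ n → y n ∈ S n)
    (hmeas : ∀ n, 1 ≤ n → ‖y n - yhat n‖ ≤ ε)
    (hxU : ∀ n, 1 ≤ n → x (n + 1) ∈ U n)
    (hxproj : ∀ n, 1 ≤ n → ∀ u ∈ U n,
      ⟪(yhat n - α • F' n (yhat n)) - x (n + 1), u - x (n + 1)⟫ ≤ 0)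
    (hyS' : ∀ n, 1 ≤ n → y (n + 1) ∈ S (n + 1))
    (hyproj : ∀ n, 1 ≤ n → ∀ u ∈ S (n + 1),
      ⟪x (n + 1) - y (n + 1), u - y (n + 1)⟫ ≤ 0)
    -- the claim
    (n : ℕ) (hn : 1 ≤ n) (z : ℕ → H) (hz : ∀ k, 1 ≤ k → z k ∈ U k) :
    F n (y n) - F n (z n)
      ≤ (‖y n - z n‖ ^ 2 - ‖y (n + 1) - z (n + 1)‖ ^ 2) / (2 * α)
        + α * G ^ 2 / 2
        + (2 * (D + α * G) + (1 + α * lam) * ε) * ((1 + α * lam) * ε) / (2 * α)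
        + (D + B) * ‖z n - z (n + 1)‖ / α := by
  have hn1 : 1 ≤ n + 1 := by omega
  set c : ℝ := (1 + α * lam) * ε with hc
  set gy : H := F' n (y n) with hgy
  set g : H := F' n (yhat n) with hgd
  set a : H := (y n - z n) - α • gy with ha
  set w : H := (yhat n - y n) - α • (g - gy) with hw
  have hzU : z n ∈ U n := hz n hn
  have hzS : z n ∈ S n := hUS n hn hzU
  have hz'S : z (n + 1) ∈ S (n + 1) := hUS (n + 1) hn1 (hz (n + 1) hn1)
  have hxS : x (n + 1) ∈ S n := hUS n hn (hxU n hn)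
  have hyz : ‖y n - z n‖ ≤ D := hSdiam n hn _ (hyS n hn) _ hzS
  have hxz : ‖x (n + 1) - z n‖ ≤ D := hSdiam n hn _ hxS _ hzS
  have hgyG : ‖gy‖ ≤ G := hGbound n hn _
  have hyhat : ‖yhat n - y n‖ ≤ ε := by rw [norm_sub_rev]; exact hmeas n hn
  have hcnn : 0 ≤ c := by positivity
  have hwc : ‖w‖ ≤ c := by
    have h1 : ‖α • (g - gy)‖ = α * ‖g - gy‖ := by
      rw [norm_smul, Real.norm_eq_abs, abs_of_pos hα]
    have h2 : ‖g - gy‖ ≤ lam * ‖yhat n - y n‖ := hLip n hn _ _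
    have h3 : lam * ‖yhat n - y n‖ ≤ lam * ε := mul_le_mul_of_nonneg_left hyhat hlam
    calc ‖w‖ ≤ ‖yhat n - y n‖ + ‖α • (g - gy)‖ := norm_sub_le _ _
      _ ≤ ε + α * (lam * ε) := by rw [h1]; nlinarith
      _ = c := by rw [hc]; ring
  have haD : ‖a‖ ≤ D + α * G := by
    have h1 : ‖α • gy‖ = α * ‖gy‖ := by
      rw [norm_smul, Real.norm_eq_abs, abs_of_pos hα]
    calc ‖a‖ ≤ ‖y n - z n‖ + ‖α • gy‖ := norm_sub_le _ _
      _ ≤ D + α * G := by rw [h1]; nlinarith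
  have hB1 : ‖x (n + 1) - z n‖ ^ 2 ≤ ‖(yhat n - α • g) - z n‖ ^ 2 :=
    proj_sq_le (hxproj n hn _ hzU)
  have hdecomp : (yhat n - α • g) - z n = a + w := by
    rw [ha, hw, smul_sub]; abel
  have hB2 : ‖(yhat n - α • g) - z n‖ ≤ ‖a‖ + ‖w‖ := by
    rw [hdecomp]; exact norm_add_le _ _
  have hB3 : ‖(yhat n - α • g) - z n‖ ^ 2 ≤ ‖a‖ ^ 2 + 2 * (D + α * G) * c + c ^ 2 := by
    nlinarith [norm_nonneg w, norm_nonneg a, norm_nonneg ((yhat n - α • g) - z n)]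
  have hA : ‖a‖ ^ 2 = ‖y n - z n‖ ^ 2 - 2 * α * ⟪gy, y n - z n⟫ + α ^ 2 * ‖gy‖ ^ 2 := by
    rw [ha, norm_sub_sq_real, real_inner_smul_right, norm_smul, Real.norm_eq_abs,
      abs_of_pos hα, mul_pow, real_inner_comm]
    ring
  have hconv : F n (y n) - F n (z n) ≤ ⟪gy, y n - z n⟫ := by
    have h1 := convex_grad_le (hFconv n hn) (hgrad n hn) (y n) (z n)
    have h2 : ⟪gy, z n - y n⟫ = -⟪gy, y n - z n⟫ := by
      rw [show z n - y n = -(y n - z n) by abel, inner_neg_right]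
    rw [← hgy] at h1
    linarith [h1, h2.le, h2.ge]
  have hgysq : ‖gy‖ ^ 2 ≤ G ^ 2 := by nlinarith [norm_nonneg gy]
  have hmul := mul_le_mul_of_nonneg_left hconv (by linarith : (0:ℝ) ≤ 2 * α)
  have hmul2 := mul_le_mul_of_nonneg_left hgysq (sq_nonneg α)
  have hmid : ‖x (n + 1) - z n‖ ^ 2
      ≤ ‖y n - z n‖ ^ 2 - 2 * α * (F n (y n) - F n (z n)) + α ^ 2 * G ^ 2
        + 2 * (D + α * G) * c + c ^ 2 := by linarith
  have hC1 : ‖y (n + 1) - z (n + 1)‖ ^ 2 ≤ ‖x (n + 1) - z (n + 1)‖ ^ 2 :=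
    proj_sq_le (hyproj n hn _ hz'S)
  have hzB : ‖z n‖ ≤ B := hSball n hn _ hzS
  have hz'B : ‖z (n + 1)‖ ≤ B := hSball (n + 1) hn1 _ hz'S
  have hdd : ‖z n - z (n + 1)‖ ≤ 2 * B := by
    calc ‖z n - z (n + 1)‖ ≤ ‖z n‖ + ‖z (n + 1)‖ := norm_sub_le _ _
      _ ≤ 2 * B := by linarith
  have hC2 : ‖x (n + 1) - z (n + 1)‖ ≤ ‖x (n + 1) - z n‖ + ‖z n - z (n + 1)‖ := by
    rw [show x (n + 1) - z (n + 1) = (x (n + 1) - z n) + (z n - z (n + 1)) by abel]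
    exact norm_add_le _ _
  have hC3 : ‖x (n + 1) - z (n + 1)‖ ^ 2
      ≤ ‖x (n + 1) - z n‖ ^ 2 + 2 * (D + B) * ‖z n - z (n + 1)‖ := by
    nlinarith [norm_nonneg (x (n + 1) - z n), norm_nonneg (z n - z (n + 1)),
      norm_nonneg (x (n + 1) - z (n + 1))]
  have h2a : (0:ℝ) < 2 * α := by linarith
  have key : F n (y n) - F n (z n)
      ≤ (‖y n - z n‖ ^ 2 - ‖y (n + 1) - z (n + 1)‖ ^ 2 + α ^ 2 * G ^ 2
          + (2 * (D + α * G) + c) * c + 2 * (D + B) * ‖z n - z (n + 1)‖) / (2 * α) := by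
    rw [le_div_iff₀ h2a]
    nlinarith [hmid, hC1, hC3]
  calc F n (y n) - F n (z n) ≤ _ := key
    _ = (‖y n - z n‖ ^ 2 - ‖y (n + 1) - z (n + 1)‖ ^ 2) / (2 * α)
        + α * G ^ 2 / 2
        + (2 * (D + α * G) + c) * c / (2 * α)
        + (D + B) * ‖z n - z (n + 1)‖ / α := by
      field_simp
end

section
/- Under the OGC setting: for every n ≥ 1 and every admissible sequence z (i.e., z k ∈ U k for all k), the average dynamic regret satisfies (1/n)·∑_{k=1}^{n} (F k (y k) − F k (z k)) ≤ (‖y 1 − z 1‖² − ‖y (n+1) − z (n+1)‖²)/(2αn) + K1·α + K2·(1 + αλ)·ε/α + (K3/α)·(1/n)·∑_{k=1}^{n} ‖z k − z (k+1)‖, where K1 = G²/2, K2 = (2(D + αG) + (1 + αλ)ε)/2, and K3 = D + B. -/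
open RealInnerProductSpace Finset

/-- Convexity gradient inequality: `f a + ⟪∇f a, b - a⟫ ≤ f b`. -/
lemma ogc_grad_ineq {H : Type*} [NormedAddCommGroup H] [InnerProductSpace ℝ H]
    (f : H → ℝ) (f' : H → H) (hconv : ConvexOn ℝ Set.univ f)
    (hd : ∀ p, HasFDerivAt f (innerSL ℝ (f' p)) p) (a b : H) :
    f a + ⟪f' a, b - a⟫ ≤ f b := by
  have hcd : ∀ t : ℝ, HasDerivAt (fun t : ℝ => a + t • (b - a)) (b - a) t := by
    intro t
    simpa using ((hasDerivAt_id t).smul_const (b - a)).const_add a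
  have hg : ∀ t : ℝ, HasDerivAt (fun t : ℝ => f (a + t • (b - a)))
      ⟪f' (a + t • (b - a)), b - a⟫ t := by
    intro t
    exact (hd _).comp_hasDerivAt t (hcd t)
  have hgc : ConvexOn ℝ Set.univ (fun t : ℝ => f (a + t • (b - a))) := by
    have := hconv.comp_affineMap (AffineMap.lineMap a b)
    have he : (fun t : ℝ => f (a + t • (b - a))) = f ∘ (AffineMap.lineMap a b) := by
      funext t; show f _ = f _; rw [AffineMap.lineMap_apply]; simp [add_comm]
    rw [he]; simpa using this
  have hs := hgc.le_slope_of_hasDerivAt (Set.mem_univ (0:ℝ)) (Set.mem_univ (1:ℝ)) one_pos (hg 0)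
  simp [slope] at hs
  linarith

/-- Projections are non-expansive toward points of the set. -/
lemma ogc_proj_le {H : Type*} [NormedAddCommGroup H] [InnerProductSpace ℝ H]
    (v p u : H) (h : ⟪v - p, u - p⟫ ≤ 0) : ‖p - u‖ ≤ ‖v - u‖ := by
  have hexp : ‖v - u‖ ^ 2 = ‖v - p‖ ^ 2 + 2 * ⟪v - p, p - u⟫ + ‖p - u‖ ^ 2 := by
    have : v - u = (v - p) + (p - u) := by abel
    rw [this, norm_add_sq_real]
  have hin : 0 ≤ ⟪v - p, p - u⟫ := by
    have : p - u = -(u - p) := by abel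
    rw [this, inner_neg_right]; linarith
  have hsq : ‖p - u‖ ^ 2 ≤ ‖v - u‖ ^ 2 := by nlinarith [sq_nonneg ‖v - p‖]
  nlinarith [norm_nonneg (p - u), norm_nonneg (v - u)]

set_option maxHeartbeats 1000000 in
/-- The finite-horizon form of Theorem 1 (OGC algorithm): the average dynamic regret
bound obtained by averaging the per-step regret bound and telescoping, with
`K1 = G²/2`, `K2 = (2(D + αG) + (1 + αλ)ε)/2`, `K3 = D + B`. -/
theorem ogc_finite_horizon_average_regret
    {H : Type*} [NormedAddCommGroup H] [InnerProductSpace ℝ H]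
    (α ε lam G D B : ℝ) (hα : 0 < α) (hε : 0 ≤ ε) (hlam : 0 ≤ lam)
    (hG : 0 ≤ G) (hD : 0 ≤ D) (hB : 0 ≤ B)
    (S U : ℕ → Set H) (F : ℕ → H → ℝ) (F' : ℕ → H → H)
    (y x yhat : ℕ → H)
    -- the sets S n : nonempty, closed, convex, in the ball of radius B, diameter ≤ D
    (hSne : ∀ n, 1 ≤ n → (S n).Nonempty)
    (hScl : ∀ n, 1 ≤ n → IsClosed (S n))
    (hScv : ∀ n, 1 ≤ n → Convex ℝ (S n))
    (hSball : ∀ n, 1 ≤ n → ∀ p ∈ S n, ‖p‖ ≤ B)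
    (hSdiam : ∀ n, 1 ≤ n → ∀ p ∈ S n, ∀ q ∈ S n, ‖p - q‖ ≤ D)
    -- the sets U n ⊆ S n : nonempty, closed, convex
    (hUS : ∀ n, 1 ≤ n → U n ⊆ S n)
    (hUne : ∀ n, 1 ≤ n → (U n).Nonempty)
    (hUcl : ∀ n, 1 ≤ n → IsClosed (U n))
    (hUcv : ∀ n, 1 ≤ n → Convex ℝ (U n))
    -- the objectives F n : convex, differentiable with gradient F' n bounded by G
    -- and lam-Lipschitz
    (hFconv : ∀ n, 1 ≤ n → ConvexOn ℝ Set.univ (F n))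
    (hgrad : ∀ n, 1 ≤ n → ∀ p, HasFDerivAt (F n) (innerSL ℝ (F' n p)) p)
    (hGbound : ∀ n, 1 ≤ n → ∀ p, ‖F' n p‖ ≤ G)
    (hLip : ∀ n, 1 ≤ n → ∀ p q, ‖F' n p - F' n q‖ ≤ lam * ‖p - q‖)
    -- OGC iterates
    (hyS : ∀ n, 1 ≤ n → y n ∈ S n)
    (hmeas : ∀ n, 1 ≤ n → ‖y n - yhat n‖ ≤ ε)
    (hxU : ∀ n, 1 ≤ n → x (n + 1) ∈ U n)
    (hxproj : ∀ n, 1 ≤ n → ∀ u ∈ U n,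
      ⟪(yhat n - α • F' n (yhat n)) - x (n + 1), u - x (n + 1)⟫ ≤ 0)
    (hyS' : ∀ n, 1 ≤ n → y (n + 1) ∈ S (n + 1))
    (hyproj : ∀ n, 1 ≤ n → ∀ u ∈ S (n + 1),
      ⟪x (n + 1) - y (n + 1), u - y (n + 1)⟫ ≤ 0)
    -- the claim
    (n : ℕ) (hn : 1 ≤ n) (z : ℕ → H) (hz : ∀ k, 1 ≤ k → z k ∈ U k) :
    (1 / (n : ℝ)) * ∑ k ∈ Finset.Icc 1 n, (F k (y k) - F k (z k))
      ≤ (‖y 1 - z 1‖ ^ 2 - ‖y (n + 1) - z (n + 1)‖ ^ 2) / (2 * α * n)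
        + (G ^ 2 / 2) * α
        + ((2 * (D + α * G) + (1 + α * lam) * ε) / 2) * ((1 + α * lam) * ε) / α
        + ((D + B) / α) * ((1 / (n : ℝ)) * ∑ k ∈ Finset.Icc 1 n, ‖z k - z (k + 1)‖) := by
  set δ : ℝ := (1 + α * lam) * ε with hδdef
  have hδ : 0 ≤ δ := by positivity
  have h2α : (0:ℝ) < 2 * α := by linarith
  -- per-step regret bound
  have key : ∀ k, 1 ≤ k → F k (y k) - F k (z k)
      ≤ (‖y k - z k‖ ^ 2 - ‖y (k + 1) - z (k + 1)‖ ^ 2) / (2 * α)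
        + (G ^ 2 / 2) * α + ((2 * (D + α * G) + δ) / 2) * δ / α
        + ((D + B) / α) * ‖z k - z (k + 1)‖ := by
    intro k hk
    have hk1 : 1 ≤ k + 1 := by omega
    have hzS : z k ∈ S k := hUS k hk (hz k hk)
    have hzS' : z (k + 1) ∈ S (k + 1) := hUS (k + 1) hk1 (hz (k + 1) hk1)
    set gy := F' k (y k) with hgy
    set v := yhat k - α • F' k (yhat k) with hv
    set w := y k - α • gy with hw
    -- projection steps
    have h1 : ‖y (k + 1) - z (k + 1)‖ ≤ ‖x (k + 1) - z (k + 1)‖ :=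
      ogc_proj_le _ _ _ (hyproj k hk (z (k + 1)) hzS')
    have h2 : ‖x (k + 1) - z k‖ ≤ ‖v - z k‖ :=
      ogc_proj_le _ _ _ (hxproj k hk (z k) (hz k hk))
    have h3 : ‖x (k + 1) - z k‖ ≤ D :=
      hSdiam k hk _ (hUS k hk (hxU k hk)) _ hzS
    have hzB : ‖z k‖ ≤ B := hSball k hk _ hzS
    have hzB' : ‖z (k + 1)‖ ≤ B := hSball (k + 1) hk1 _ hzS'
    have hzz : ‖z k - z (k + 1)‖ ≤ 2 * B :=
      (norm_sub_le _ _).trans (by linarith)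
    have hzznn : (0:ℝ) ≤ ‖z k - z (k + 1)‖ := norm_nonneg _
    -- comparator movement
    have h5 : ‖x (k + 1) - z (k + 1)‖ ^ 2
        ≤ ‖x (k + 1) - z k‖ ^ 2 + 2 * (D + B) * ‖z k - z (k + 1)‖ := by
      have hexp : ‖x (k + 1) - z (k + 1)‖ ^ 2
          = ‖x (k + 1) - z k‖ ^ 2 + 2 * ⟪x (k + 1) - z k, z k - z (k + 1)⟫
            + ‖z k - z (k + 1)‖ ^ 2 := by
        have : x (k + 1) - z (k + 1) = (x (k + 1) - z k) + (z k - z (k + 1)) := by abel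
        rw [this, norm_add_sq_real]
      have hcs : ⟪x (k + 1) - z k, z k - z (k + 1)⟫ ≤ D * ‖z k - z (k + 1)‖ :=
        (real_inner_le_norm _ _).trans
          (mul_le_mul_of_nonneg_right h3 hzznn)
      nlinarith [norm_nonneg (z k - z (k + 1))]
    -- measurement error
    have h6 : ‖v - w‖ ≤ δ := by
      have hvw : v - w = -(y k - yhat k) - α • (F' k (yhat k) - gy) := by
        rw [hv, hw, smul_sub]; abel
      have hLk : ‖F' k (yhat k) - gy‖ ≤ lam * ε := by
        calc ‖F' k (yhat k) - gy‖ ≤ lam * ‖yhat k - y k‖ := hLip k hk _ _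
          _ ≤ lam * ε := by
              rw [norm_sub_rev]; exact mul_le_mul_of_nonneg_left (hmeas k hk) hlam
      rw [hvw]
      refine (norm_sub_le _ _).trans ?_
      rw [norm_neg, norm_smul, Real.norm_eq_abs, abs_of_pos hα, hδdef]
      have h1' := hmeas k hk
      have h2' := mul_le_mul_of_nonneg_left hLk (le_of_lt hα)
      nlinarith
    have hyzD : ‖y k - z k‖ ≤ D := hSdiam k hk _ (hyS k hk) _ hzS
    have hgyG : ‖gy‖ ≤ G := hGbound k hk _
    have h7 : ‖w - z k‖ ≤ D + α * G := by
      have : w - z k = (y k - z k) - α • gy := by rw [hw]; abel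
      rw [this]
      calc ‖(y k - z k) - α • gy‖ ≤ ‖y k - z k‖ + ‖α • gy‖ := norm_sub_le _ _
        _ ≤ D + α * G := by
            rw [norm_smul, Real.norm_eq_abs, abs_of_pos hα]
            have := mul_le_mul_of_nonneg_left hgyG (le_of_lt hα)
            linarith
    have h8 : ‖v - z k‖ ≤ ‖w - z k‖ + δ := by
      have : v - z k = (w - z k) + (v - w) := by abel
      rw [this]
      exact (norm_add_le _ _).trans (by linarith)
    have h9 : ‖v - z k‖ ^ 2 ≤ ‖w - z k‖ ^ 2 + (2 * (D + α * G) + δ) * δ := by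
      nlinarith [norm_nonneg (v - z k), norm_nonneg (w - z k)]
    have h10 : ‖w - z k‖ ^ 2
        = ‖y k - z k‖ ^ 2 - 2 * α * ⟪gy, y k - z k⟫ + α ^ 2 * ‖gy‖ ^ 2 := by
      have hwz : w - z k = (y k - z k) - α • gy := by rw [hw]; abel
      rw [hwz, norm_sub_sq_real, real_inner_smul_right, norm_smul, Real.norm_eq_abs,
        abs_of_pos hα, mul_pow, real_inner_comm]
      ring
    have h11 : F k (y k) - F k (z k) ≤ ⟪gy, y k - z k⟫ := by
      have := ogc_grad_ineq (F k) (F' k) (hFconv k hk) (hgrad k hk) (y k) (z k)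
      have hneg : ⟪gy, z k - y k⟫ = -⟪gy, y k - z k⟫ := by
        rw [show z k - y k = -(y k - z k) by abel, inner_neg_right]
      rw [← hgy] at this
      linarith [this, hneg.le, hneg.ge]
    have hgyG2 : α ^ 2 * ‖gy‖ ^ 2 ≤ α ^ 2 * G ^ 2 := by
      have : ‖gy‖ ^ 2 ≤ G ^ 2 := pow_le_pow_left₀ (norm_nonneg _) hgyG 2
      nlinarith [sq_nonneg α]
    -- combine (squared chain)
    have h1sq : ‖y (k + 1) - z (k + 1)‖ ^ 2 ≤ ‖x (k + 1) - z (k + 1)‖ ^ 2 :=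
      pow_le_pow_left₀ (norm_nonneg _) h1 2
    have h2sq : ‖x (k + 1) - z k‖ ^ 2 ≤ ‖v - z k‖ ^ 2 :=
      pow_le_pow_left₀ (norm_nonneg _) h2 2
    have hmain : 2 * α * (F k (y k) - F k (z k))
        ≤ ‖y k - z k‖ ^ 2 - ‖y (k + 1) - z (k + 1)‖ ^ 2 + α ^ 2 * G ^ 2
          + (2 * (D + α * G) + δ) * δ + 2 * (D + B) * ‖z k - z (k + 1)‖ := by
      have h11' : 2 * α * (F k (y k) - F k (z k)) ≤ 2 * α * ⟪gy, y k - z k⟫ :=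
        mul_le_mul_of_nonneg_left h11 (le_of_lt h2α)
      linarith [h1sq, h5, h2sq, h9, h10.le, h10.ge, hgyG2, h11']
    have e : (‖y k - z k‖ ^ 2 - ‖y (k + 1) - z (k + 1)‖ ^ 2) / (2 * α)
        + (G ^ 2 / 2) * α + ((2 * (D + α * G) + δ) / 2) * δ / α
        + ((D + B) / α) * ‖z k - z (k + 1)‖
        = (‖y k - z k‖ ^ 2 - ‖y (k + 1) - z (k + 1)‖ ^ 2 + α ^ 2 * G ^ 2
          + (2 * (D + α * G) + δ) * δ + 2 * (D + B) * ‖z k - z (k + 1)‖) / (2 * α) := by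
      field_simp
    rw [e, le_div_iff₀ h2α]
    linarith [hmain]
  -- sum the per-step bounds over k = 1..n
  have hsum : ∑ k ∈ Finset.Icc 1 n, (F k (y k) - F k (z k))
      ≤ (‖y 1 - z 1‖ ^ 2 - ‖y (n + 1) - z (n + 1)‖ ^ 2) / (2 * α)
        + (n : ℝ) * ((G ^ 2 / 2) * α) + (n : ℝ) * (((2 * (D + α * G) + δ) / 2) * δ / α)
        + ((D + B) / α) * ∑ k ∈ Finset.Icc 1 n, ‖z k - z (k + 1)‖ := by
    have hstep : ∑ k ∈ Finset.Icc 1 n, (F k (y k) - F k (z k))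
        ≤ ∑ k ∈ Finset.Icc 1 n,
            ((‖y k - z k‖ ^ 2 - ‖y (k + 1) - z (k + 1)‖ ^ 2) / (2 * α)
              + (G ^ 2 / 2) * α + ((2 * (D + α * G) + δ) / 2) * δ / α
              + ((D + B) / α) * ‖z k - z (k + 1)‖) := by
      apply Finset.sum_le_sum
      intro k hkmem
      exact key k (Finset.mem_Icc.mp hkmem).1
    have htel : ∑ k ∈ Finset.Icc 1 n,
        (‖y k - z k‖ ^ 2 - ‖y (k + 1) - z (k + 1)‖ ^ 2)
        = ‖y 1 - z 1‖ ^ 2 - ‖y (n + 1) - z (n + 1)‖ ^ 2 := by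
      have hgen : ∀ m : ℕ, ∑ k ∈ Finset.Icc 1 m,
          (‖y k - z k‖ ^ 2 - ‖y (k + 1) - z (k + 1)‖ ^ 2)
          = ‖y 1 - z 1‖ ^ 2 - ‖y (m + 1) - z (m + 1)‖ ^ 2 := by
        intro m
        induction m with
        | zero => simp
        | succ p ih =>
          rw [Finset.sum_Icc_succ_top (by omega : 1 ≤ p + 1), ih]
          ring
      exact hgen n
    have hsplit : ∑ k ∈ Finset.Icc 1 n,
        ((‖y k - z k‖ ^ 2 - ‖y (k + 1) - z (k + 1)‖ ^ 2) / (2 * α)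
          + (G ^ 2 / 2) * α + ((2 * (D + α * G) + δ) / 2) * δ / α
          + ((D + B) / α) * ‖z k - z (k + 1)‖)
        = (∑ k ∈ Finset.Icc 1 n,
            (‖y k - z k‖ ^ 2 - ‖y (k + 1) - z (k + 1)‖ ^ 2)) / (2 * α)
          + (n : ℝ) * ((G ^ 2 / 2) * α) + (n : ℝ) * (((2 * (D + α * G) + δ) / 2) * δ / α)
          + ((D + B) / α) * ∑ k ∈ Finset.Icc 1 n, ‖z k - z (k + 1)‖ := by
      rw [Finset.sum_add_distrib, Finset.sum_add_distrib, Finset.sum_add_distrib,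
        ← Finset.sum_div, ← Finset.mul_sum, Finset.sum_const, Finset.sum_const,
        Nat.card_Icc]
      simp only [Nat.add_sub_cancel, nsmul_eq_mul]
      rw [← Finset.mul_sum]
      ring
    rw [hsplit, htel] at hstep
    exact hstep
  -- divide by n
  have hnpos : (0:ℝ) < (n : ℝ) := by exact_mod_cast hn
  have hninv : (0:ℝ) ≤ 1 / (n : ℝ) := by positivity
  have := mul_le_mul_of_nonneg_left hsum hninv
  calc (1 / (n : ℝ)) * ∑ k ∈ Finset.Icc 1 n, (F k (y k) - F k (z k))
      ≤ (1 / (n : ℝ)) * ((‖y 1 - z 1‖ ^ 2 - ‖y (n + 1) - z (n + 1)‖ ^ 2) / (2 * α)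
        + (n : ℝ) * ((G ^ 2 / 2) * α) + (n : ℝ) * (((2 * (D + α * G) + δ) / 2) * δ / α)
        + ((D + B) / α) * ∑ k ∈ Finset.Icc 1 n, ‖z k - z (k + 1)‖) := this
    _ = (‖y 1 - z 1‖ ^ 2 - ‖y (n + 1) - z (n + 1)‖ ^ 2) / (2 * α * n)
        + (G ^ 2 / 2) * α
        + ((2 * (D + α * G) + (1 + α * lam) * ε) / 2) * ((1 + α * lam) * ε) / α
        + ((D + B) / α) * ((1 / (n : ℝ)) * ∑ k ∈ Finset.Icc 1 n, ‖z k - z (k + 1)‖) := by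
      rw [hδdef]
      field_simp
end

section
/- (Open-loop online gradient descent with time-varying feasible sets; Theorem 1 with exact feedback ε = 0 and S n = U n.) Let H be a real inner product space, α > 0, λ ≥ 0, G ≥ 0, D ≥ 0, B ≥ 0. For n ≥ 1, let U n ⊆ H be nonempty closed convex sets contained in the closed ball of radius B centered at 0 with diameter at most D, and let F n : H → ℝ be convex and differentiable with ‖∇F n (x)‖ ≤ G and ‖∇F n (x) − ∇F n (x')‖ ≤ λ‖x − x'‖ for all x, x' ∈ H. Suppose the iterates satisfy: x 1 ∈ U 1, and for every n ≥ 1, x (n+1) is the projection of x n − α • ∇F n (x n) onto U n (i.e., x (n+1) ∈ U n and ⟨(x n − α • ∇F n (x n)) − x (n+1), u − x (n+1)⟩ ≤ 0 for all u ∈ U n). Then for every sequence z with z n ∈ U n for all n, limsup_{n→∞} (1/n)·∑_{k=1}^{n} (F k (x k) − F k (z k)) ≤ α·G²/2 + ((D + B)/α)·limsup_{n→∞} (1/n)·∑_{k=1}^{n} ‖z k − z (k+1)‖. -/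
open RealInnerProductSpace Finset Filter

lemma ogd_convex_grad_ineq {H : Type*} [NormedAddCommGroup H] [InnerProductSpace ℝ H]
    {F : H → ℝ} {g : H → H} (hF : ConvexOn ℝ Set.univ F)
    (hg : ∀ p, HasFDerivAt F (innerSL ℝ (g p)) p) (a b : H) :
    F a + ⟪g a, b - a⟫ ≤ F b := by
  set γ : ℝ → H := fun t => a + t • (b - a) with hγdef
  have hγ : ∀ t : ℝ, HasDerivAt γ (b - a) t := by
    intro t
    simpa [hγdef] using ((hasDerivAt_id t).smul_const (b - a)).const_add a
  have hφ : ∀ t : ℝ, HasDerivAt (F ∘ γ) ⟪g (γ t), b - a⟫ t := by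
    intro t
    simpa using (hg (γ t)).comp_hasDerivAt t (hγ t)
  have hconv : ConvexOn ℝ Set.univ (F ∘ γ) := by
    have := hF.comp_affineMap (AffineMap.lineMap a b : ℝ →ᵃ[ℝ] H)
    have heq : (F ∘ (AffineMap.lineMap a b : ℝ →ᵃ[ℝ] H)) = F ∘ γ := by
      funext t
      show F _ = F _
      congr 1
      simp [hγdef, AffineMap.lineMap_apply_module]
      module
    rw [heq] at this
    simpa using this
  have hslope := hconv.le_slope_of_hasDerivAt (Set.mem_univ (0:ℝ)) (Set.mem_univ (1:ℝ))
    one_pos (hφ 0)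
  have hγ0 : γ 0 = a := by simp [hγdef]
  have hγ1 : γ 1 = b := by simp [hγdef]
  rw [slope_def_field] at hslope
  simp only [Function.comp, hγ0, hγ1] at hslope
  have : ⟪g a, b - a⟫ ≤ F b - F a := by
    simpa [hγ0] using hslope
  linarith

set_option maxHeartbeats 1000000 in
/-- Open-loop online gradient descent with time-varying feasible sets
(Theorem 1 with exact feedback `ε = 0` and `S n = U n`, cf. Remark 2): the average
dynamic regret is bounded by `αG²/2 + ((D+B)/α)·limsup V(z_{1:n})/n` against any
admissible comparator sequence. -/
theorem online_gradient_descent_time_varying_sets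
    {H : Type*} [NormedAddCommGroup H] [InnerProductSpace ℝ H]
    (α lam G D B : ℝ) (hα : 0 < α) (hlam : 0 ≤ lam)
    (hG : 0 ≤ G) (hD : 0 ≤ D) (hB : 0 ≤ B)
    (U : ℕ → Set H) (F : ℕ → H → ℝ) (F' : ℕ → H → H) (x : ℕ → H)
    -- the sets U n : nonempty, closed, convex, in the ball of radius B, diameter ≤ D
    (hUne : ∀ n, 1 ≤ n → (U n).Nonempty)
    (hUcl : ∀ n, 1 ≤ n → IsClosed (U n))
    (hUcv : ∀ n, 1 ≤ n → Convex ℝ (U n))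
    (hUball : ∀ n, 1 ≤ n → ∀ p ∈ U n, ‖p‖ ≤ B)
    (hUdiam : ∀ n, 1 ≤ n → ∀ p ∈ U n, ∀ q ∈ U n, ‖p - q‖ ≤ D)
    -- the objectives F n : convex, differentiable with gradient F' n bounded by G
    -- and lam-Lipschitz
    (hFconv : ∀ n, 1 ≤ n → ConvexOn ℝ Set.univ (F n))
    (hgrad : ∀ n, 1 ≤ n → ∀ p, HasFDerivAt (F n) (innerSL ℝ (F' n p)) p)
    (hGbound : ∀ n, 1 ≤ n → ∀ p, ‖F' n p‖ ≤ G)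
    (hLip : ∀ n, 1 ≤ n → ∀ p q, ‖F' n p - F' n q‖ ≤ lam * ‖p - q‖)
    -- iterates: x 1 ∈ U 1 and x (n+1) is the projection of x n − α∇Fₙ(x n) onto U n
    (hx1 : x 1 ∈ U 1)
    (hxU : ∀ n, 1 ≤ n → x (n + 1) ∈ U n)
    (hxproj : ∀ n, 1 ≤ n → ∀ u ∈ U n,
      ⟪(x n - α • F' n (x n)) - x (n + 1), u - x (n + 1)⟫ ≤ 0)
    -- the claim
    (z : ℕ → H) (hz : ∀ n, 1 ≤ n → z n ∈ U n) :
    limsup (fun n : ℕ => (1 / (n : ℝ)) * ∑ k ∈ Finset.Icc 1 n, (F k (x k) - F k (z k)))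
        atTop
      ≤ α * G ^ 2 / 2
        + ((D + B) / α)
          * limsup (fun n : ℕ => (1 / (n : ℝ)) * ∑ k ∈ Finset.Icc 1 n, ‖z k - z (k + 1)‖)
              atTop := by
  have h2α : (0:ℝ) < 2 * α := by linarith
  set C : ℝ := (D + B) / α with hCdef
  have hC : 0 ≤ C := div_nonneg (by linarith) hα.le
  set f : ℕ → ℝ := fun n => (1 / (n : ℝ)) * ∑ k ∈ Finset.Icc 1 n, (F k (x k) - F k (z k))
    with hfdef
  set V : ℕ → ℝ := fun n => (1 / (n : ℝ)) * ∑ k ∈ Finset.Icc 1 n, ‖z k - z (k + 1)‖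
    with hVdef
  clear_value f V
  -- x k lies in the ball of radius B for k ≥ 1
  have hxball : ∀ k : ℕ, 1 ≤ k → ‖x k‖ ≤ B := by
    intro k hk
    match k, hk with
    | 1, _ => exact hUball 1 le_rfl _ hx1
    | (m+2), _ => exact hUball (m+1) (by omega) _ (hxU (m+1) (by omega))
  -- per-step descent inequality
  have key : ∀ n : ℕ, 1 ≤ n → F n (x n) - F n (z n) ≤
      (‖x n - z n‖^2 - ‖x (n+1) - z n‖^2) / (2*α) + α * G^2 / 2 := by
    intro n hn
    set g := F' n (x n) with hgdef
    set y := x n - α • g with hydef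
    set p := x (n+1) with hpdef
    have hproj : ⟪y - p, z n - p⟫ ≤ 0 := hxproj n hn (z n) (hz n hn)
    have h1 : ‖p - z n‖^2 ≤ ‖y - z n‖^2 := by
      have hexp2 : ‖y - z n‖^2 = ‖y - p‖^2 + 2*⟪y - p, p - z n⟫ + ‖p - z n‖^2 := by
        rw [show y - z n = (y - p) + (p - z n) by abel, norm_add_sq_real]
      have hflip : ⟪y - p, p - z n⟫ = -⟪y - p, z n - p⟫ := by
        rw [← inner_neg_right]; congr 1; abel
      nlinarith [sq_nonneg ‖y - p‖, hproj]
    have h2 : ‖y - z n‖^2 = ‖x n - z n‖^2 - 2*α*⟪g, x n - z n⟫ + α^2 * ‖g‖^2 := by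
      have hexp : y - z n = (x n - z n) - α • g := by rw [hydef]; abel
      rw [hexp, norm_sub_sq_real, real_inner_smul_right, norm_smul]
      simp only [Real.norm_eq_abs, mul_pow, sq_abs, real_inner_comm (x n - z n) g]
      ring
    have h3 : F n (x n) - F n (z n) ≤ ⟪g, x n - z n⟫ := by
      have := ogd_convex_grad_ineq (hFconv n hn) (hgrad n hn) (x n) (z n)
      have hneg : ⟪g, z n - x n⟫ = -⟪g, x n - z n⟫ := by
        rw [← inner_neg_right]; congr 1; abel
      rw [hgdef] at hneg ⊢
      linarith [this, hneg.le, hneg.ge]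
    have hgb : ‖g‖ ≤ G := hGbound n hn (x n)
    have h4 : ⟪g, x n - z n⟫ ≤ (‖x n - z n‖^2 - ‖p - z n‖^2 + α^2 * G^2) / (2*α) := by
      rw [le_div_iff₀ h2α]
      nlinarith [h1, h2, mul_le_mul hgb hgb (norm_nonneg g) hG, sq_nonneg α,
        mul_le_mul_of_nonneg_left (mul_le_mul hgb hgb (norm_nonneg g) hG) (sq_nonneg α)]
    have h5 : (‖x n - z n‖^2 - ‖p - z n‖^2 + α^2 * G^2) / (2*α)
        = (‖x n - z n‖^2 - ‖p - z n‖^2) / (2*α) + α * G^2 / 2 := by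
      field_simp
    rw [h5] at h4
    linarith
  -- comparator drift inequality
  have keyB : ∀ n : ℕ, 1 ≤ n → ‖x (n+1) - z (n+1)‖^2 ≤
      ‖x (n+1) - z n‖^2 + 2*(D+B) * ‖z n - z (n+1)‖ := by
    intro n hn
    set p := x (n+1) with hpdef
    have hdiam : ‖p - z n‖ ≤ D := hUdiam n hn _ (hxU n hn) _ (hz n hn)
    have hpb : ‖p‖ ≤ B := hUball n hn _ (hxU n hn)
    have hzb : ‖z (n+1)‖ ≤ B := hUball (n+1) (by omega) _ (hz (n+1) (by omega))
    have hnorm1 : ‖p - z (n+1)‖ ≤ 2*B := by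
      calc ‖p - z (n+1)‖ ≤ ‖p‖ + ‖z (n+1)‖ := norm_sub_le _ _
        _ ≤ 2*B := by linarith
    have hid : ‖p - z (n+1)‖^2 - ‖p - z n‖^2
        = ⟪(p - z (n+1)) - (p - z n), (p - z (n+1)) + (p - z n)⟫ := by
      rw [inner_sub_left, inner_add_right, inner_add_right,
        real_inner_self_eq_norm_sq, real_inner_self_eq_norm_sq,
        real_inner_comm (p - z n) (p - z (n+1))]
      ring
    have hdd : (p - z (n+1)) - (p - z n) = z n - z (n+1) := by abel
    rw [hdd] at hid
    have hcs : ⟪z n - z (n+1), (p - z (n+1)) + (p - z n)⟫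
        ≤ ‖z n - z (n+1)‖ * ‖(p - z (n+1)) + (p - z n)‖ := real_inner_le_norm _ _
    have htri : ‖(p - z (n+1)) + (p - z n)‖ ≤ ‖p - z (n+1)‖ + ‖p - z n‖ := norm_add_le _ _
    have hzn : (0:ℝ) ≤ ‖z n - z (n+1)‖ := norm_nonneg _
    nlinarith [hcs, htri, hnorm1, hdiam, hzn]
  -- telescoped bound by induction
  have main : ∀ n : ℕ,
      (∑ k ∈ Finset.Icc 1 n, (F k (x k) - F k (z k))) + ‖x (n+1) - z (n+1)‖^2 / (2*α)
        ≤ ‖x 1 - z 1‖^2 / (2*α) + n * (α * G^2 / 2)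
          + C * ∑ k ∈ Finset.Icc 1 n, ‖z k - z (k+1)‖ := by
    intro n
    induction n with
    | zero =>
      rw [show Finset.Icc 1 0 = (∅ : Finset ℕ) from Finset.Icc_eq_empty (by omega)]
      simp
    | succ m ih =>
      rw [Finset.sum_Icc_succ_top (by omega : 1 ≤ m + 1),
        Finset.sum_Icc_succ_top (by omega : 1 ≤ m + 1)]
      have hk := key (m+1) (by omega)
      have hB' := keyB (m+1) (by omega)
      have hB'' : ‖x (m+2) - z (m+2)‖^2 / (2*α)
          ≤ ‖x (m+2) - z (m+1)‖^2 / (2*α) + C * ‖z (m+1) - z (m+2)‖ := by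
        have step : ‖x (m+2) - z (m+2)‖^2 / (2*α)
            ≤ (‖x (m+2) - z (m+1)‖^2 + 2*(D+B) * ‖z (m+1) - z (m+2)‖) / (2*α) := by
          apply div_le_div_of_nonneg_right hB' h2α.le
        have hsplit : (‖x (m+2) - z (m+1)‖^2 + 2*(D+B) * ‖z (m+1) - z (m+2)‖) / (2*α)
            = ‖x (m+2) - z (m+1)‖^2 / (2*α) + C * ‖z (m+1) - z (m+2)‖ := by
          rw [hCdef]; field_simp
        linarith [hsplit ▸ step]
      rw [sub_div] at hk
      push_cast
      linarith
  -- per-n averaged bound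
  have bound : ∀ n : ℕ, 1 ≤ n →
      f n ≤ D^2 / (2*α) * (1 / (n:ℝ)) + α * G^2 / 2 + C * V n := by
    intro n hn
    have hn0 : (0:ℝ) < n := by exact_mod_cast hn
    have hne : ((n:ℝ)) ≠ 0 := ne_of_gt hn0
    have hD1 : ‖x 1 - z 1‖ ≤ D := hUdiam 1 le_rfl _ hx1 _ (hz 1 le_rfl)
    have hD2 : ‖x 1 - z 1‖^2 ≤ D^2 := by nlinarith [norm_nonneg (x 1 - z 1)]
    have hfn : f n = (1/(n:ℝ)) * ∑ k ∈ Finset.Icc 1 n, (F k (x k) - F k (z k)) := by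
      simp only [hfdef]
    have hVn : V n = (1/(n:ℝ)) * ∑ k ∈ Finset.Icc 1 n, ‖z k - z (k+1)‖ := by
      simp only [hVdef]
    rw [hfn, hVn]
    obtain ⟨S, hS_eq⟩ : ∃ S, ∑ k ∈ Finset.Icc 1 n, (F k (x k) - F k (z k)) = S := ⟨_, rfl⟩
    obtain ⟨W, hW_eq⟩ : ∃ W, ∑ k ∈ Finset.Icc 1 n, ‖z k - z (k+1)‖ = W := ⟨_, rfl⟩
    have hS : S ≤ D^2/(2*α) + n*(α*G^2/2) + C*W := by
      rw [← hS_eq, ← hW_eq]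
      have := main n
      have hnn : 0 ≤ ‖x (n+1) - z (n+1)‖^2/(2*α) := by positivity
      have hDd : ‖x 1 - z 1‖^2/(2*α) ≤ D^2/(2*α) := div_le_div_of_nonneg_right hD2 h2α.le
      linarith
    rw [hS_eq, hW_eq]
    calc (1/(n:ℝ)) * S ≤ (1/(n:ℝ)) * (D^2/(2*α) + n*(α*G^2/2) + C*W) :=
          mul_le_mul_of_nonneg_left hS (by positivity)
      _ = D^2/(2*α)*(1/(n:ℝ)) + α*G^2/2 + C*((1/(n:ℝ))*W) := by
          have h1n : (1/(n:ℝ)) * ((n:ℝ)*(α*G^2/2)) = α*G^2/2 := by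
            rw [← mul_assoc, one_div_mul_cancel hne, one_mul]
          rw [mul_add, mul_add, h1n]
          ring
  -- boundedness facts for limsup manipulation
  have hVub : ∀ n : ℕ, V n ≤ 2*B := by
    intro n
    rcases Nat.eq_zero_or_pos n with h0 | hpos
    · have hV0 : V n = 0 := by simp only [hVdef, h0]; simp
      rw [hV0]; positivity
    have hn0 : (0:ℝ) < n := by exact_mod_cast hpos
    have hsum : (∑ k ∈ Finset.Icc 1 n, ‖z k - z (k+1)‖) ≤ n * (2*B) := by
      calc (∑ k ∈ Finset.Icc 1 n, ‖z k - z (k+1)‖)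
          ≤ ∑ k ∈ Finset.Icc 1 n, (2*B) := by
            apply Finset.sum_le_sum
            intro k hk
            simp only [Finset.mem_Icc] at hk
            have h1 : ‖z k‖ ≤ B := hUball k hk.1 _ (hz k hk.1)
            have h2 : ‖z (k+1)‖ ≤ B := hUball (k+1) (by omega) _ (hz (k+1) (by omega))
            calc ‖z k - z (k+1)‖ ≤ ‖z k‖ + ‖z (k+1)‖ := norm_sub_le _ _
              _ ≤ 2*B := by linarith
        _ = n * (2*B) := by rw [Finset.sum_const, Nat.card_Icc]; simp [mul_comm]
    calc V n = (1 / (n:ℝ)) * ∑ k ∈ Finset.Icc 1 n, ‖z k - z (k+1)‖ := by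
          simp only [hVdef]
      _ ≤ (1 / (n:ℝ)) * (n * (2*B)) :=
          mul_le_mul_of_nonneg_left hsum (by positivity)
      _ = 2*B := by field_simp
  have hVbdd : IsBoundedUnder (· ≤ ·) atTop V :=
    isBoundedUnder_of_eventually_le (Eventually.of_forall hVub)
  have hflb : ∀ n : ℕ, 1 ≤ n → -(2*G*B) ≤ f n := by
    intro n hn
    simp only [hfdef]
    have hn0 : (0:ℝ) < n := by exact_mod_cast hn
    have hsum : -(n * (2*G*B)) ≤ ∑ k ∈ Finset.Icc 1 n, (F k (x k) - F k (z k)) := by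
      have : ∑ k ∈ Finset.Icc 1 n, (-(2*G*B)) ≤
          ∑ k ∈ Finset.Icc 1 n, (F k (x k) - F k (z k)) := by
        apply Finset.sum_le_sum
        intro k hk
        simp only [Finset.mem_Icc] at hk
        have hconv := ogd_convex_grad_ineq (hFconv k hk.1) (hgrad k hk.1) (z k) (x k)
        have hgb : ‖F' k (z k)‖ ≤ G := hGbound k hk.1 _
        have hxz : ‖x k - z k‖ ≤ 2*B := by
          calc ‖x k - z k‖ ≤ ‖x k‖ + ‖z k‖ := norm_sub_le _ _
            _ ≤ 2*B := by
                have := hxball k hk.1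
                have := hUball k hk.1 _ (hz k hk.1)
                linarith
        have hcs : |⟪F' k (z k), x k - z k⟫| ≤ ‖F' k (z k)‖ * ‖x k - z k‖ :=
          abs_real_inner_le_norm _ _
        have habs : |⟪F' k (z k), x k - z k⟫| ≤ G * (2*B) := by
          calc |⟪F' k (z k), x k - z k⟫| ≤ ‖F' k (z k)‖ * ‖x k - z k‖ := hcs
            _ ≤ G * (2*B) := by
                apply mul_le_mul hgb hxz (norm_nonneg _) hG
        have := abs_le.mp habs
        linarith
      calc -(n * (2*G*B)) = ∑ k ∈ Finset.Icc 1 n, (-(2*G*B)) := by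
            rw [Finset.sum_const, Nat.card_Icc]; push_cast; ring_nf
        _ ≤ _ := this
    have := mul_le_mul_of_nonneg_left hsum (by positivity : (0:ℝ) ≤ 1 / (n:ℝ))
    calc -(2*G*B) = (1 / (n:ℝ)) * (-(n * (2*G*B))) := by
          rw [show (1/(n:ℝ)) * (-((n:ℝ) * (2*G*B))) = ((1/(n:ℝ)) * (n:ℝ)) * (-(2*G*B)) by ring,
            one_div_mul_cancel (ne_of_gt hn0), one_mul]
      _ ≤ _ := this
  have hfcob : IsCoboundedUnder (· ≤ ·) atTop f := by
    apply Filter.IsBoundedUnder.isCoboundedUnder_le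
    exact isBoundedUnder_of_eventually_ge
      ((eventually_ge_atTop 1).mono fun n hn => hflb n hn)
  set L : ℝ := limsup V atTop with hLdef
  -- conclude via an ε-argument
  have hgoal : ∀ ε : ℝ, 0 < ε → limsup f atTop ≤ α * G^2 / 2 + C * L + ε := by
    intro ε hε
    have hC1 : (0:ℝ) < C + 1 := by linarith
    set ε1 : ℝ := ε / (2*(C+1)) with hε1def
    have hε1 : 0 < ε1 := by positivity
    have hCε1 : C * ε1 ≤ ε / 2 := by
      have h1 : C * ε1 ≤ (C+1) * ε1 := by nlinarith
      have h2 : (C+1) * ε1 = ε / 2 := by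
        rw [hε1def]; field_simp
      linarith
    have hVev : ∀ᶠ n in atTop, V n < L + ε1 :=
      eventually_lt_of_limsup_lt (by linarith) hVbdd
    have htend : Tendsto (fun n : ℕ => D^2 / (2*α) * (1 / (n:ℝ))) atTop (nhds 0) := by
      have h := tendsto_one_div_atTop_nhds_zero_nat.const_mul (D^2 / (2*α))
      rwa [mul_zero] at h
    have hDev : ∀ᶠ n : ℕ in atTop, D^2 / (2*α) * (1 / (n:ℝ)) < ε / 2 :=
      htend.eventually_lt_const (by positivity)
    apply limsup_le_of_le hfcob
    filter_upwards [hVev, hDev, eventually_ge_atTop 1] with n h1 h2 h3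
    have hb := bound n h3
    have hCV : C * V n ≤ C * (L + ε1) := mul_le_mul_of_nonneg_left h1.le hC
    have : C * (L + ε1) = C * L + C * ε1 := by ring
    linarith
  by_contra hcon
  push_neg at hcon
  have hpos : 0 < (limsup f atTop - (α * G^2 / 2 + C * L)) / 2 := by linarith
  have := hgoal _ hpos
  linarith
end

section
/- (Corollary 1.) Consider the ROGC algorithm: the central controller and the convex devices run OGC on the relaxed convex problem in which each discrete device j ∈ 𝒥_d has feasible set Δ(T k (j)) (the probability simplex over its finite set T k (j) of feasible setpoints at step k) and linear cost Ĉ k^{(j)}(y) = ∑_{s} C k^{(j)}(s)·y(s), and at each step k each discrete device implements an independent random setpoint S k (j) drawn from the distribution y k (j) ∈ Δ(T k (j)) produced by OGC. Suppose the relaxed problem satisfies the hypotheses of Theorem 1 with constants α > 0, ε ≥ 0, λ ≥ 0, G ≥ 0, D ≥ 0, B ≥ 0 (measurement error at most ε; gradients of the overall objectives F k bounded by G and λ-Lipschitz; feasible sets closed, convex, contained in the ball of radius B, with diameter at most D; comparators z k feasible for the relaxed problem). Define the random dynamic regret R n (z) = ∑_{k=1}^{n} ( ∑_{j ∈ 𝒥_c}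 w j · C k^{(j)}(y k (j)) + ∑_{j ∈ 𝒥_d} w j · C k^{(j)}(S k (j)) + G k (y k) − F k (z k) ). Then limsup_{n→∞} 𝔼[R n (z)]/n ≤ K1·α + K2·(1 + αλ)·ε/α + (K3/α)·limsup_{n→∞} (1/n)·∑_{k=1}^{n} ‖z k − z (k+1)‖, where K1 = G²/2, K2 = (2(D + αG) + (1 + αλ)ε)/2, and K3 = D + B. -/
open RealInnerProductSpace Finset Filter MeasureTheory Topology

/-- Gradient inequality for a convex differentiable function. -/
lemma rogc_convex_grad_ineq {H : Type*} [NormedAddCommGroup H] [InnerProductSpace ℝ H]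
    {f : H → ℝ} (hf : ConvexOn ℝ Set.univ f) {g x y : H}
    (hg : HasFDerivAt f (innerSL ℝ g) x) : f x + ⟪g, y - x⟫ ≤ f y := by
  set φ : ℝ → ℝ := fun t => f (x + t • (y - x)) with hφdef
  have hx0 : x + (0:ℝ) • (y - x) = x := by simp
  have hg' : HasFDerivAt f (innerSL ℝ g) (x + (0:ℝ) • (y - x)) := by rw [hx0]; exact hg
  have hline : HasDerivAt (fun t : ℝ => x + t • (y - x)) (y - x) 0 := by
    simpa using ((hasDerivAt_id (0:ℝ)).smul_const (y - x)).const_add x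
  have hφ : HasDerivAt φ ⟪g, y - x⟫ 0 := by
    have h := hg'.comp_hasDerivAt (0:ℝ) hline
    simp at h
    exact h
  -- slope bound on (0,1]
  have hslope : ∀ t ∈ Set.Ioc (0:ℝ) 1, slope φ 0 t ≤ f y - f x := by
    intro t ht
    have hcc := hf.2 (Set.mem_univ x) (Set.mem_univ y)
      (by linarith [ht.1, ht.2] : (0:ℝ) ≤ 1 - t) (le_of_lt ht.1) (by ring)
    have hxt : (1 - t) • x + t • y = x + t • (y - x) := by
      simp [smul_sub, sub_smul]; abel
    rw [hxt] at hcc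
    have hφt : φ t ≤ (1 - t) * f x + t * f y := hcc
    have hφ0 : φ 0 = f x := by simp [hφdef]
    rw [slope_def_field, hφ0, sub_zero, div_le_iff₀ ht.1]
    nlinarith [ht.1]
  have htend : Tendsto (slope φ 0) (𝓝[>] 0) (𝓝 ⟪g, y - x⟫) :=
    (hasDerivAt_iff_tendsto_slope.1 hφ).mono_left
      (nhdsWithin_mono _ (fun t ht => ne_of_gt ht))
  have hmem : Set.Ioc (0:ℝ) 1 ∈ 𝓝[>] (0:ℝ) := Ioc_mem_nhdsGT_of_mem ⟨le_refl 0, one_pos⟩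
  have hle : ⟪g, y - x⟫ ≤ f y - f x :=
    le_of_tendsto htend ((Filter.eventually_iff_exists_mem.2 ⟨_, hmem, fun t ht => ht⟩ : ∀ᶠ t in 𝓝[>] (0:ℝ), t ∈ Set.Ioc (0:ℝ) 1).mono hslope)
  linarith

/-- Projection characterization gives distance decrease. -/
lemma rogc_proj_sq {H : Type*} [NormedAddCommGroup H] [InnerProductSpace ℝ H]
    {v p u : H} (h : ⟪v - p, u - p⟫ ≤ 0) : ‖p - u‖ ≤ ‖v - u‖ := by
  have hexp : ‖v - u‖ ^ 2 = ‖v - p‖ ^ 2 + 2 * ⟪v - p, p - u⟫ + ‖p - u‖ ^ 2 := by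
    have : v - u = (v - p) + (p - u) := by abel
    rw [this, norm_add_sq_real]
  have h2 : ⟪v - p, p - u⟫ = - ⟪v - p, u - p⟫ := by
    rw [← inner_neg_right]; congr 1; abel
  have hsq : ‖p - u‖ ^ 2 ≤ ‖v - u‖ ^ 2 := by nlinarith [sq_nonneg ‖v - p‖]
  nlinarith [norm_nonneg (p - u), norm_nonneg (v - u)]

set_option maxHeartbeats 1000000 in
/-- Corollary 1: expected dynamic regret bound for the Randomized Online Gradient
Control (ROGC) algorithm.  The central controller and the convex devices `𝒥_c` run
OGC on the relaxed convex problem, in which each discrete device `j ∈ 𝒥_d` has as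
feasible set the probability simplex over its finite set `T k j` of feasible
setpoints and the linear relaxed cost `Ĉ k j (y) = ∑ s, c k j s · y s`; at each step
each discrete device implements a random setpoint `Srand k j` drawn from the
distribution `p k j` (the `j`-component `y k (j)` of the OGC iterate).  Under the
hypotheses of Theorem 1 for the relaxed problem, the expected dynamic regret
`𝔼[R n (z)]/n` satisfies the bound of Theorem 1 with `K1 = G²/2`,
`K2 = (2(D + αG) + (1 + αλ)ε)/2`, `K3 = D + B`. -/
theorem rogc_expected_dynamic_regret
    {H : Type*} [NormedAddCommGroup H] [InnerProductSpace ℝ H]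
    (α ε lam G D B : ℝ) (hα : 0 < α) (hε : 0 ≤ ε) (hlam : 0 ≤ lam)
    (hG : 0 ≤ G) (hD : 0 ≤ D) (hB : 0 ≤ B)
    (S U : ℕ → Set H) (F : ℕ → H → ℝ) (F' : ℕ → H → H)
    (y x yhat : ℕ → H)
    -- the sets S n : nonempty, closed, convex, in the ball of radius B, diameter ≤ D
    (hSne : ∀ n, 1 ≤ n → (S n).Nonempty)
    (hScl : ∀ n, 1 ≤ n → IsClosed (S n))
    (hScv : ∀ n, 1 ≤ n → Convex ℝ (S n))
    (hSball : ∀ n, 1 ≤ n → ∀ p ∈ S n, ‖p‖ ≤ B)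
    (hSdiam : ∀ n, 1 ≤ n → ∀ p ∈ S n, ∀ q ∈ S n, ‖p - q‖ ≤ D)
    -- the sets U n ⊆ S n : nonempty, closed, convex
    (hUS : ∀ n, 1 ≤ n → U n ⊆ S n)
    (hUne : ∀ n, 1 ≤ n → (U n).Nonempty)
    (hUcl : ∀ n, 1 ≤ n → IsClosed (U n))
    (hUcv : ∀ n, 1 ≤ n → Convex ℝ (U n))
    -- the objectives F n : convex, differentiable with gradient F' n bounded by G
    -- and lam-Lipschitz
    (hFconv : ∀ n, 1 ≤ n → ConvexOn ℝ Set.univ (F n))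
    (hgrad : ∀ n, 1 ≤ n → ∀ p, HasFDerivAt (F n) (innerSL ℝ (F' n p)) p)
    (hGbound : ∀ n, 1 ≤ n → ∀ p, ‖F' n p‖ ≤ G)
    (hLip : ∀ n, 1 ≤ n → ∀ p q, ‖F' n p - F' n q‖ ≤ lam * ‖p - q‖)
    -- OGC iterates
    (hyS : ∀ n, 1 ≤ n → y n ∈ S n)
    (hmeas : ∀ n, 1 ≤ n → ‖y n - yhat n‖ ≤ ε)
    (hxU : ∀ n, 1 ≤ n → x (n + 1) ∈ U n)
    (hxproj : ∀ n, 1 ≤ n → ∀ u ∈ U n,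
      ⟪(yhat n - α • F' n (yhat n)) - x (n + 1), u - x (n + 1)⟫ ≤ 0)
    (hyS' : ∀ n, 1 ≤ n → y (n + 1) ∈ S (n + 1))
    (hyproj : ∀ n, 1 ≤ n → ∀ u ∈ S (n + 1),
      ⟪x (n + 1) - y (n + 1), u - y (n + 1)⟫ ≤ 0)
    -- devices: a finite index set partitioned into convex devices Jc and
    -- discrete devices Jd, with nonnegative weights w
    {J : Type*} [Fintype J] [DecidableEq J]
    (Jc Jd : Finset J) (hJdisj : Disjoint Jc Jd) (hJcover : Jc ∪ Jd = Finset.univ)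
    (w : J → ℝ) (hw : ∀ j, 0 ≤ w j)
    -- relaxed (advertised) per-device costs, as functions of the overall setpoint,
    -- and the convex system-wide objectives Gk
    (Chat : ℕ → J → H → ℝ) (Gk : ℕ → H → ℝ)
    (hGkconv : ∀ k, 1 ≤ k → ConvexOn ℝ Set.univ (Gk k))
    -- the overall objective of the relaxed problem
    (hFdef : ∀ k, 1 ≤ k → ∀ p,
      F k p = (∑ j ∈ Jc, w j * Chat k j p) + (∑ j ∈ Jd, w j * Chat k j p) + Gk k p)
    -- finite feasible sets and costs of the discrete devices
    (T : ℕ → J → Type*) [∀ k j, Fintype (T k j)] [∀ k j, Nonempty (T k j)]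
    [∀ k j, MeasurableSpace (T k j)] [∀ k j, MeasurableSingletonClass (T k j)]
    (c : (k : ℕ) → (j : J) → T k j → ℝ)
    -- the randomization: independent random setpoints Srand k j with distribution
    -- pdist k j, the j-component of the OGC iterate y k (a point of the simplex)
    {Ω : Type*} [MeasurableSpace Ω] (μ : Measure Ω) [IsProbabilityMeasure μ]
    (Srand : (k : ℕ) → (j : J) → Ω → T k j)
    (hSmeas : ∀ k j, Measurable (Srand k j))
    (pdist : (k : ℕ) → (j : J) → T k j → ℝ)
    (hp0 : ∀ k j s, 0 ≤ pdist k j s) (hp1 : ∀ k j, ∑ s, pdist k j s = 1)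
    (hlaw : ∀ k, 1 ≤ k → ∀ j ∈ Jd, ∀ s, μ (Srand k j ⁻¹' {s}) = ENNReal.ofReal (pdist k j s))
    (hindep : ∀ k, 1 ≤ k → ∀ j ∈ Jd, ∀ k', 1 ≤ k' → ∀ j' ∈ Jd, (k, j) ≠ (k', j') →
      ∀ (s : T k j) (s' : T k' j'),
        μ (Srand k j ⁻¹' {s} ∩ Srand k' j' ⁻¹' {s'})
          = μ (Srand k j ⁻¹' {s}) * μ (Srand k' j' ⁻¹' {s'}))
    -- the advertised relaxed cost of a discrete device evaluated at the OGC iterate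
    -- is the expected cost under its distribution
    (hadv : ∀ k, 1 ≤ k → ∀ j ∈ Jd, Chat k j (y k) = ∑ s, c k j s * pdist k j s)
    -- the claim
    (z : ℕ → H) (hz : ∀ k, 1 ≤ k → z k ∈ U k) :
    limsup (fun n : ℕ =>
        (∫ ω, (∑ k ∈ Finset.Icc 1 n,
            ((∑ j ∈ Jc, w j * Chat k j (y k)) + (∑ j ∈ Jd, w j * c k j (Srand k j ω))
              + Gk k (y k) - F k (z k))) ∂μ) / (n : ℝ)) atTop
      ≤ (G ^ 2 / 2) * α
        + ((2 * (D + α * G) + (1 + α * lam) * ε) / 2) * ((1 + α * lam) * ε) / α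
        + ((D + B) / α)
          * limsup (fun n : ℕ => (1 / (n : ℝ)) * ∑ k ∈ Finset.Icc 1 n, ‖z k - z (k + 1)‖)
              atTop := by
  -- abbreviations
  set E : ℕ → ℝ := fun k => F k (y k) - F k (z k) with hEdef
  set dl : ℕ → ℝ := fun k => ‖z k - z (k + 1)‖ with hdldef
  have h2α : (0:ℝ) < 2 * α := by linarith
  -- per-step gradient inequality (scaled by 2α)
  have hstep : ∀ k, 1 ≤ k → 2 * α * E k ≤
      ‖yhat k - z k‖ ^ 2 - ‖x (k + 1) - z k‖ ^ 2
        + α ^ 2 * G ^ 2 + 2 * α * G * ε + 2 * α * lam * ε * D := by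
    intro k hk
    have hzU := hz k hk
    have hzS := hUS k hk hzU
    have hySk := hyS k hk
    have hyz : ‖y k - z k‖ ≤ D := hSdiam k hk _ hySk _ hzS
    have hme := hmeas k hk
    have hg1 := rogc_convex_grad_ineq (hFconv k hk) (hgrad k hk (y k)) (y := z k)
    have hEk : E k ≤ ⟪F' k (y k), y k - z k⟫ := by
      have hswap : ⟪F' k (y k), z k - y k⟫ = - ⟪F' k (y k), y k - z k⟫ := by
        rw [← inner_neg_right]; congr 1; abel
      rw [hswap] at hg1
      simp only [hEdef]
      linarith
    have hdec : ⟪F' k (y k), y k - z k⟫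
        = ⟪F' k (yhat k), yhat k - z k⟫ + ⟪F' k (yhat k), y k - yhat k⟫
          + ⟪F' k (y k) - F' k (yhat k), y k - z k⟫ := by
      simp only [inner_sub_left, inner_sub_right]; ring
    have hCS1 : ⟪F' k (yhat k), y k - yhat k⟫ ≤ G * ε :=
      le_trans (real_inner_le_norm _ _)
        (mul_le_mul (hGbound k hk _) hme (norm_nonneg _) hG)
    have hCS2 : ⟪F' k (y k) - F' k (yhat k), y k - z k⟫ ≤ lam * ε * D := by
      refine le_trans (real_inner_le_norm _ _) ?_
      have h1 : ‖F' k (y k) - F' k (yhat k)‖ ≤ lam * ε :=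
        le_trans (hLip k hk _ _) (mul_le_mul_of_nonneg_left hme hlam)
      exact mul_le_mul h1 hyz (norm_nonneg _) (mul_nonneg hlam hε)
    -- projection step
    have hproj := hxproj k hk (z k) hzU
    have hpn : ‖x (k + 1) - z k‖ ≤ ‖(yhat k - α • F' k (yhat k)) - z k‖ :=
      rogc_proj_sq hproj
    have hpn2 : ‖x (k + 1) - z k‖ ^ 2 ≤ ‖(yhat k - α • F' k (yhat k)) - z k‖ ^ 2 :=
      pow_le_pow_left₀ (norm_nonneg _) hpn 2
    have hrw : (yhat k - α • F' k (yhat k)) - z k = (yhat k - z k) - α • F' k (yhat k) := by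
      abel
    have hexp : ‖(yhat k - α • F' k (yhat k)) - z k‖ ^ 2
        = ‖yhat k - z k‖ ^ 2 - 2 * α * ⟪F' k (yhat k), yhat k - z k⟫
          + α ^ 2 * ‖F' k (yhat k)‖ ^ 2 := by
      rw [hrw, norm_sub_sq_real, real_inner_smul_right, norm_smul]
      rw [Real.norm_eq_abs, mul_pow, sq_abs, real_inner_comm]
      ring
    have hgG : ‖F' k (yhat k)‖ ^ 2 ≤ G ^ 2 :=
      pow_le_pow_left₀ (norm_nonneg _) (hGbound k hk _) 2
    have hinner : 2 * α * ⟪F' k (yhat k), yhat k - z k⟫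
        ≤ ‖yhat k - z k‖ ^ 2 - ‖x (k + 1) - z k‖ ^ 2 + α ^ 2 * G ^ 2 := by
      nlinarith [sq_nonneg α]
    nlinarith [hEk, hdec, hCS1, hCS2, hinner, hα.le]
  -- measurement link
  have hlink : ∀ k, 1 ≤ k →
      ‖yhat k - z k‖ ^ 2 ≤ ‖y k - z k‖ ^ 2 + 2 * D * ε + ε ^ 2 := by
    intro k hk
    have hyz : ‖y k - z k‖ ≤ D := hSdiam k hk _ (hyS k hk) _ (hUS k hk (hz k hk))
    have hme := hmeas k hk
    have hd : yhat k - z k = (y k - z k) - (y k - yhat k) := by abel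
    rw [hd, norm_sub_sq_real]
    have habs := abs_real_inner_le_norm (y k - z k) (y k - yhat k)
    have h1 : ‖y k - z k‖ * ‖y k - yhat k‖ ≤ D * ε :=
      mul_le_mul hyz hme (norm_nonneg _) hD
    have h2 : ‖y k - yhat k‖ ^ 2 ≤ ε ^ 2 := pow_le_pow_left₀ (norm_nonneg _) hme 2
    have := abs_le.1 habs
    nlinarith
  -- base bound
  have hbase : ‖y 1 - z 1‖ ^ 2 ≤ D ^ 2 :=
    pow_le_pow_left₀ (norm_nonneg _)
      (hSdiam 1 le_rfl _ (hyS 1 le_rfl) _ (hUS 1 le_rfl (hz 1 le_rfl))) 2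
  -- inter-step link via projection on S (m+1)
  have hstep2 : ∀ m, 1 ≤ m →
      ‖y (m + 1) - z (m + 1)‖ ^ 2 ≤ ‖x (m + 1) - z m‖ ^ 2 + 2 * (D + B) * dl m := by
    intro m hm
    have hm1 : 1 ≤ m + 1 := by omega
    have hp : ‖y (m + 1) - z (m + 1)‖ ≤ ‖x (m + 1) - z (m + 1)‖ :=
      rogc_proj_sq (hyproj m hm (z (m + 1)) (hUS (m + 1) hm1 (hz (m + 1) hm1)))
    have htri : ‖x (m + 1) - z (m + 1)‖ ≤ ‖x (m + 1) - z m‖ + dl m := by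
      have : x (m + 1) - z (m + 1) = (x (m + 1) - z m) + (z m - z (m + 1)) := by abel
      rw [this]; exact norm_add_le _ _
    have hb : ‖x (m + 1) - z m‖ ≤ D :=
      hSdiam m hm _ (hUS m hm (hxU m hm)) _ (hUS m hm (hz m hm))
    have hdl2B : dl m ≤ 2 * B := by
      refine le_trans (norm_sub_le _ _) ?_
      have h1 := hSball m hm _ (hUS m hm (hz m hm))
      have h2 := hSball (m + 1) hm1 _ (hUS (m + 1) hm1 (hz (m + 1) hm1))
      linarith
    have h0 : 0 ≤ ‖y (m + 1) - z (m + 1)‖ := norm_nonneg _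
    have h0' : 0 ≤ ‖x (m + 1) - z m‖ := norm_nonneg _
    have h0'' : 0 ≤ dl m := norm_nonneg _
    nlinarith [le_trans hp htri]
  -- the telescoping induction
  set Cm : ℝ := α ^ 2 * G ^ 2 + 2 * α * G * ε + 2 * α * lam * ε * D + 2 * D * ε + ε ^ 2
    with hCmdef
  have hdlnn : ∀ k, 0 ≤ dl k := fun k => norm_nonneg _
  have hP : ∀ n : ℕ, 2 * α * (∑ k ∈ Finset.Icc 1 (n + 1), E k)
      + ‖x (n + 2) - z (n + 1)‖ ^ 2
      ≤ D ^ 2 + ((n:ℝ) + 1) * Cm + 2 * (D + B) * ∑ k ∈ Finset.Icc 1 n, dl k := by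
    intro n
    induction n with
    | zero =>
      simp only [Nat.cast_zero, zero_add, Finset.Icc_self, Finset.sum_singleton,
        show (1:ℕ) + 1 = 2 from rfl]
      have h1 := hstep 1 le_rfl
      have h2 := hlink 1 le_rfl
      rw [show Finset.Icc 1 0 = (∅ : Finset ℕ) by rfl]
      simp only [Finset.sum_empty, mul_zero, add_zero, one_mul]
      simp only [hCmdef]
      linarith [h1, h2, hbase]
    | succ m ih =>
      have hm1 : 1 ≤ m + 1 := by omega
      rw [Finset.sum_Icc_succ_top (by omega : 1 ≤ m + 2) E,
        Finset.sum_Icc_succ_top (by omega : 1 ≤ m + 1) dl]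
      have h1 := hstep (m + 2) (by omega)
      have h2 := hlink (m + 2) (by omega)
      have h3 := hstep2 (m + 1) hm1
      push_cast
      push_cast at ih
      ring_nf
      ring_nf at ih h1 h2 h3
      linarith [ih, h1, h2, h3]
  -- summed bound for n ≥ 1
  have hSum : ∀ n, 1 ≤ n → 2 * α * (∑ k ∈ Finset.Icc 1 n, E k)
      ≤ D ^ 2 + (n:ℝ) * Cm + 2 * (D + B) * ∑ k ∈ Finset.Icc 1 n, dl k := by
    intro n hn
    obtain ⟨m, rfl⟩ : ∃ m, n = m + 1 := ⟨n - 1, by omega⟩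
    have h1 := hP m
    have h2 : ∑ k ∈ Finset.Icc 1 m, dl k ≤ ∑ k ∈ Finset.Icc 1 (m + 1), dl k :=
      Finset.sum_le_sum_of_subset_of_nonneg
        (Finset.Icc_subset_Icc le_rfl (by omega)) (fun k _ _ => hdlnn k)
    have h3 : (0:ℝ) ≤ ‖x (m + 2) - z (m + 1)‖ ^ 2 := sq_nonneg _
    have h4 : (0:ℝ) ≤ 2 * (D + B) := by linarith
    push_cast
    nlinarith
  -- lower bound on E (for coboundedness)
  have hElb : ∀ k, 1 ≤ k → -(G * D) ≤ E k := by
    intro k hk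
    have hg1 := rogc_convex_grad_ineq (hFconv k hk) (hgrad k hk (z k)) (y := y k)
    have habs := abs_real_inner_le_norm (F' k (z k)) (y k - z k)
    have h1 : ‖F' k (z k)‖ * ‖y k - z k‖ ≤ G * D :=
      mul_le_mul (hGbound k hk _) (hSdiam k hk _ (hyS k hk) _ (hUS k hk (hz k hk)))
        (norm_nonneg _) hG
    have := abs_le.1 habs
    simp only [hEdef]
    linarith
  -- expectation computation
  have hintpart : ∀ k, 1 ≤ k → ∀ j ∈ Jd,
      Integrable (fun ω => c k j (Srand k j ω)) μ ∧
        ∫ ω, c k j (Srand k j ω) ∂μ = Chat k j (y k) := by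
    intro k hk j hj
    have hmeasA : ∀ s : T k j, MeasurableSet (Srand k j ⁻¹' {s}) :=
      fun s => hSmeas k j (measurableSet_singleton s)
    have hfun : (fun ω => c k j (Srand k j ω))
        = fun ω => ∑ s : T k j, Set.indicator (Srand k j ⁻¹' {s}) (fun _ => c k j s) ω := by
      funext ω
      symm
      have hsingle := Fintype.sum_eq_single (Srand k j ω)
        (f := fun s => Set.indicator (Srand k j ⁻¹' {s}) (fun _ => c k j s) ω)
        (fun s hs => Set.indicator_of_notMem
          (show ω ∉ Srand k j ⁻¹' {s} from
            fun hmem => hs (Set.mem_singleton_iff.1 hmem).symm) _)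
      rw [hsingle]
      exact Set.indicator_of_mem rfl _
    have hintg : ∀ s : T k j,
        Integrable (Set.indicator (Srand k j ⁻¹' {s}) (fun _ => c k j s)) μ :=
      fun s => (integrable_const _).indicator (hmeasA s)
    constructor
    · rw [hfun]; exact integrable_finset_sum _ (fun s _ => hintg s)
    · rw [hfun, integral_finset_sum _ (fun s _ => hintg s)]
      have hone : ∀ s : T k j,
          ∫ ω, Set.indicator (Srand k j ⁻¹' {s}) (fun _ => c k j s) ω ∂μ
            = c k j s * pdist k j s := by
        intro s
        rw [integral_indicator_const _ (hmeasA s), measureReal_def, hlaw k hk j hj s,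
          ENNReal.toReal_ofReal (hp0 k j s), smul_eq_mul, mul_comm]
      rw [Finset.sum_congr rfl (fun s _ => hone s), hadv k hk j hj]
  have hSint : ∀ k, 1 ≤ k →
      Integrable (fun ω => ∑ j ∈ Jd, w j * c k j (Srand k j ω)) μ := by
    intro k hk
    exact integrable_finset_sum _ (fun j hj => ((hintpart k hk j hj).1.const_mul (w j)))
  have hfkint : ∀ k, 1 ≤ k → Integrable (fun ω =>
      (∑ j ∈ Jc, w j * Chat k j (y k)) + (∑ j ∈ Jd, w j * c k j (Srand k j ω))
        + Gk k (y k) - F k (z k)) μ := by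
    intro k hk
    exact (((integrable_const _).add (hSint k hk)).add (integrable_const _)).sub
      (integrable_const _)
  have hIk : ∀ k, 1 ≤ k → ∫ ω, ((∑ j ∈ Jc, w j * Chat k j (y k))
      + (∑ j ∈ Jd, w j * c k j (Srand k j ω)) + Gk k (y k) - F k (z k)) ∂μ = E k := by
    intro k hk
    have hre : (fun ω => (∑ j ∈ Jc, w j * Chat k j (y k))
          + (∑ j ∈ Jd, w j * c k j (Srand k j ω)) + Gk k (y k) - F k (z k))
        = fun ω => (∑ j ∈ Jd, w j * c k j (Srand k j ω))
          + ((∑ j ∈ Jc, w j * Chat k j (y k)) + Gk k (y k) - F k (z k)) := by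
      funext ω; ring
    rw [hre, integral_add (hSint k hk) (integrable_const _),
      integral_finset_sum _ (fun j hj => ((hintpart k hk j hj).1.const_mul (w j)))]
    have hterm : ∀ j ∈ Jd, ∫ ω, w j * c k j (Srand k j ω) ∂μ = w j * Chat k j (y k) := by
      intro j hj
      rw [integral_const_mul, (hintpart k hk j hj).2]
    rw [Finset.sum_congr rfl hterm]
    simp only [integral_const, measureReal_def, measure_univ, ENNReal.toReal_one, one_smul, smul_eq_mul, one_mul]
    have hF := hFdef k hk (y k)
    simp only [hEdef]
    linarith
  have hInt : ∀ n : ℕ, (∫ ω, (∑ k ∈ Finset.Icc 1 n,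
      ((∑ j ∈ Jc, w j * Chat k j (y k)) + (∑ j ∈ Jd, w j * c k j (Srand k j ω))
        + Gk k (y k) - F k (z k))) ∂μ) = ∑ k ∈ Finset.Icc 1 n, E k := by
    intro n
    rw [integral_finset_sum _ (fun k hk => hfkint k (Finset.mem_Icc.1 hk).1)]
    exact Finset.sum_congr rfl (fun k hk => hIk k (Finset.mem_Icc.1 hk).1)
  -- rewrite the goal
  have hgoalfun : (fun n : ℕ => (∫ ω, (∑ k ∈ Finset.Icc 1 n,
      ((∑ j ∈ Jc, w j * Chat k j (y k)) + (∑ j ∈ Jd, w j * c k j (Srand k j ω))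
        + Gk k (y k) - F k (z k))) ∂μ) / (n : ℝ))
      = fun n : ℕ => (∑ k ∈ Finset.Icc 1 n, E k) / (n : ℝ) := by
    funext n; rw [hInt n]
  rw [hgoalfun]
  -- pure real analysis from here
  set T : ℕ → ℝ := fun n => (1 / (n:ℝ)) * ∑ k ∈ Finset.Icc 1 n, dl k with hTdef
  set L : ℝ := limsup T atTop with hLdef
  set cc : ℝ := (D + B) / α with hccdef
  have hcc0 : 0 ≤ cc := div_nonneg (by linarith) hα.le
  have hT2B : ∀ n : ℕ, T n ≤ 2 * B := by
    intro n
    rcases Nat.eq_zero_or_pos n with hn | hn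
    · subst hn; simp only [hTdef]; norm_num; linarith
    have hN : (0:ℝ) < n := by exact_mod_cast hn
    have hsum : ∑ k ∈ Finset.Icc 1 n, dl k ≤ (n:ℝ) * (2 * B) := by
      calc ∑ k ∈ Finset.Icc 1 n, dl k ≤ ∑ k ∈ Finset.Icc 1 n, (2 * B) := by
            refine Finset.sum_le_sum (fun k hk => ?_)
            have hk1 : 1 ≤ k := (Finset.mem_Icc.1 hk).1
            have hk2 : 1 ≤ k + 1 := by omega
            refine le_trans (norm_sub_le _ _) ?_
            have h1 := hSball k hk1 _ (hUS k hk1 (hz k hk1))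
            have h2 := hSball (k + 1) hk2 _ (hUS (k + 1) hk2 (hz (k + 1) hk2))
            linarith
        _ = (n:ℝ) * (2 * B) := by
            rw [Finset.sum_const, Nat.card_Icc]
            simp
    simp only [hTdef]
    rw [one_div, inv_mul_le_iff₀ hN]
    linarith [hsum]
  have hTbdd : IsBoundedUnder (· ≤ ·) atTop T :=
    ⟨2 * B, eventually_map.2 (Eventually.of_forall hT2B)⟩
  have hcobdd : IsCoboundedUnder (· ≤ ·) atTop
      (fun n : ℕ => (∑ k ∈ Finset.Icc 1 n, E k) / (n:ℝ)) := by
    refine IsBoundedUnder.isCoboundedUnder_le ⟨-(G * D), eventually_map.2 ?_⟩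
    filter_upwards [eventually_ge_atTop 1] with n hn
    have hN : (0:ℝ) < n := by exact_mod_cast hn
    rw [le_div_iff₀ hN]
    have hsum : ∑ k ∈ Finset.Icc 1 n, (-(G * D)) ≤ ∑ k ∈ Finset.Icc 1 n, E k :=
      Finset.sum_le_sum (fun k hk => hElb k (Finset.mem_Icc.1 hk).1)
    rw [Finset.sum_const, Nat.card_Icc] at hsum
    simp only [Nat.add_sub_cancel, nsmul_eq_mul] at hsum
    linarith [hsum]
  -- the constant inequality
  have hKconst : Cm / (2 * α) ≤ G ^ 2 / 2 * α
      + (2 * (D + α * G) + (1 + α * lam) * ε) / 2 * ((1 + α * lam) * ε) / α := by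
    rw [div_le_iff₀ h2α, hCmdef]
    have hexp : (G ^ 2 / 2 * α
        + (2 * (D + α * G) + (1 + α * lam) * ε) / 2 * ((1 + α * lam) * ε) / α) * (2 * α)
        = α ^ 2 * G ^ 2 + (2 * (D + α * G) + (1 + α * lam) * ε) * ((1 + α * lam) * ε) := by
      field_simp
    rw [hexp]
    nlinarith [mul_nonneg (mul_nonneg hα.le hlam) (mul_nonneg hε hε),
      mul_nonneg (mul_nonneg (mul_nonneg hα.le hα.le) hlam) (mul_nonneg hG hε),
      mul_nonneg (mul_nonneg (mul_nonneg (mul_nonneg hα.le hα.le) hlam) hlam)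
        (mul_nonneg hε hε)]
  -- final limsup argument
  refine le_of_forall_pos_le_add (fun η hη => ?_)
  have hη' : 0 < η / (2 * (cc + 1)) := by positivity
  have h1 : ∀ᶠ n in atTop, T n < L + η / (2 * (cc + 1)) :=
    eventually_lt_of_limsup_lt (by linarith) hTbdd
  have h2 : ∀ᶠ n : ℕ in atTop, D ^ 2 / (2 * α) / (n:ℝ) < η / 2 :=
    (tendsto_const_div_atTop_nhds_zero_nat (D ^ 2 / (2 * α))).eventually_lt_const
      (by linarith)
  refine limsup_le_of_le hcobdd ?_
  filter_upwards [h1, h2, eventually_ge_atTop 1] with n hT1 hD2 hn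
  have hN : (0:ℝ) < n := by exact_mod_cast hn
  have hSumn := hSum n hn
  have hSd : ∑ k ∈ Finset.Icc 1 n, dl k = (n:ℝ) * T n := by
    simp only [hTdef]; field_simp
  rw [hSd] at hSumn
  have hTn : T n ≤ L + η / (2 * (cc + 1)) := hT1.le
  have hccη : cc * (η / (2 * (cc + 1))) ≤ η / 2 := by
    rw [mul_div_assoc', div_le_div_iff₀ (by linarith) (by norm_num : (0:ℝ) < 2)]
    nlinarith [mul_nonneg hcc0 hη.le]
  have hDB : 2 * (D + B) = 2 * α * cc := by
    rw [hccdef]; field_simp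
  rw [hDB] at hSumn
  -- now: 2α Sn ≤ D² + n Cm + 2α cc n T n
  have hD2' : D ^ 2 ≤ η / 2 * (2 * α) * (n:ℝ) := by
    rw [div_lt_iff₀ hN, div_lt_iff₀ h2α] at hD2
    nlinarith [hD2]
  have hCm' : Cm ≤ (G ^ 2 / 2 * α
      + (2 * (D + α * G) + (1 + α * lam) * ε) / 2 * ((1 + α * lam) * ε) / α) * (2 * α) := by
    rw [div_le_iff₀ h2α] at hKconst
    exact hKconst
  have hccT : cc * T n ≤ cc * L + η / 2 := by
    have := mul_le_mul_of_nonneg_left hTn hcc0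
    calc cc * T n ≤ cc * (L + η / (2 * (cc + 1))) := this
      _ = cc * L + cc * (η / (2 * (cc + 1))) := by ring
      _ ≤ cc * L + η / 2 := by linarith
  rw [div_le_iff₀ hN]
  set K12 : ℝ := G ^ 2 / 2 * α
      + (2 * (D + α * G) + (1 + α * lam) * ε) / 2 * ((1 + α * lam) * ε) / α with hK12def
  have hmain : 2 * α * (∑ k ∈ Finset.Icc 1 n, E k)
      ≤ 2 * α * ((K12 + cc * L + η) * (n:ℝ)) := by
    have hs1 : 2 * α * cc * ((n:ℝ) * T n) ≤ 2 * α * ((cc * L + η / 2) * (n:ℝ)) := by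
      have := mul_le_mul_of_nonneg_left hccT (by positivity : (0:ℝ) ≤ 2 * α * n)
      nlinarith [hccT, hN.le, h2α.le]
    have hs2 : (n:ℝ) * Cm ≤ 2 * α * (K12 * (n:ℝ)) := by
      have := mul_le_mul_of_nonneg_left hCm' hN.le
      nlinarith [hCm', hN.le]
    nlinarith [hSumn, hD2', hs1, hs2]
  have := le_of_mul_le_mul_left (by linarith [hmain] : 2 * α * (∑ k ∈ Finset.Icc 1 n, E k) ≤ 2 * α * ((K12 + cc * L + η) * (n:ℝ))) h2α
  linarith [this]
end
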